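/- arXiv:2009.07802 — 2 statements merged into one kernel-verified Lean document; each statement's English description precedes it below -/
import Mathlib

section
/- Let L₁ and L₂ be smooth fields of endomorphisms on an open set U ⊆ ℝⁿ, both Nijenhuis operators, with L₂ (and L₁) invertible at every point. Then αL₁ + βL₂ is a Nijenhuis operator for all constants α, β ∈ ℝ if and only if L₁L₂⁻¹ is a Nijenhuis operator. -/
open scoped BigOperators

/-- Partial derivative `∂_k f` at `x`. -/
noncomputable def pd {n : ℕ} (f : (Fin n → ℝ) → ℝ) (k : Fin n) (x : Fin n → ℝ) : ℝ :=
  fderiv ℝ f x (Pi.single k 1)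

/-- Christoffel symbols `Γ^i_{jk}` of a metric `g`. -/
noncomputable def Christoffel {n : ℕ} (g : (Fin n → ℝ) → Matrix (Fin n) (Fin n) ℝ)
    (i j k : Fin n) (x : Fin n → ℝ) : ℝ :=
  (1 / 2) * ∑ s, (g x)⁻¹ i s *
    (pd (fun y => g y s k) j x + pd (fun y => g y s j) k x - pd (fun y => g y j k) s x)

/-- Curvature tensor `R^l_{ijk}` of a metric `g`. -/
noncomputable def Curv {n : ℕ} (g : (Fin n → ℝ) → Matrix (Fin n) (Fin n) ℝ)
    (l i j k : Fin n) (x : Fin n → ℝ) : ℝ :=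
  pd (Christoffel g l i k) j x - pd (Christoffel g l i j) k x
    + ∑ s, (Christoffel g l j s x * Christoffel g s i k x
        - Christoffel g l k s x * Christoffel g s i j x)

/-- `g` is a (smooth pseudo-Riemannian) metric on `U`. -/
def IsMetricOn {n : ℕ} (g : (Fin n → ℝ) → Matrix (Fin n) (Fin n) ℝ)
    (U : Set (Fin n → ℝ)) : Prop :=
  (∀ i j, ContDiffOn ℝ (⊤ : ℕ∞) (fun x => g x i j) U) ∧
    (∀ x ∈ U, (g x).IsSymm) ∧ ∀ x ∈ U, (g x).det ≠ 0

/-- The metric `g` is flat on `U`. -/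
def IsFlatOn {n : ℕ} (g : (Fin n → ℝ) → Matrix (Fin n) (Fin n) ℝ)
    (U : Set (Fin n → ℝ)) : Prop :=
  ∀ x ∈ U, ∀ l i j k : Fin n, Curv g l i j k x = 0

/-- The metric `g` has constant curvature `K` on `U`:
`g^{js} R^i_{skm} = K (δ^i_k δ^j_m − δ^i_m δ^j_k)`. -/
def HasConstCurvOn {n : ℕ} (g : (Fin n → ℝ) → Matrix (Fin n) (Fin n) ℝ)
    (U : Set (Fin n → ℝ)) (K : ℝ) : Prop :=
  ∀ x ∈ U, ∀ i j k m : Fin n,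
    (∑ s, (g x)⁻¹ j s * Curv g i s k m x)
      = K * ((if i = k then (1:ℝ) else 0) * (if j = m then (1:ℝ) else 0)
          - (if i = m then (1:ℝ) else 0) * (if j = k then (1:ℝ) else 0))

/-- `λ = ½ tr L`. -/
noncomputable def lamL {n : ℕ} (L : (Fin n → ℝ) → Matrix (Fin n) (Fin n) ℝ)
    (x : Fin n → ℝ) : ℝ :=
  (1 / 2) * ∑ i, L x i i

/-- `L_{ij} = L^s_i g_{sj}`. -/
noncomputable def lowL {n : ℕ} (g L : (Fin n → ℝ) → Matrix (Fin n) (Fin n) ℝ)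
    (x : Fin n → ℝ) (i j : Fin n) : ℝ :=
  ∑ s, L x s i * g x s j

/-- `∇_k L_{ij} = ∂_k L_{ij} − Γ^s_{ki} L_{sj} − Γ^s_{kj} L_{is}`. -/
noncomputable def covL {n : ℕ} (g L : (Fin n → ℝ) → Matrix (Fin n) (Fin n) ℝ)
    (k i j : Fin n) (x : Fin n → ℝ) : ℝ :=
  pd (fun y => lowL g L y i j) k x
    - ∑ s, Christoffel g s k i x * lowL g L x s j
    - ∑ s, Christoffel g s k j x * lowL g L x i s

/-- `L` is geodesically compatible with `g` on `U`: it is smooth, `L_{ij}` is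
symmetric, and `∇_k L_{ij} = λ_i g_{jk} + λ_j g_{ik}` with `λ = ½ tr L`. -/
def GeodCompatOn {n : ℕ} (g L : (Fin n → ℝ) → Matrix (Fin n) (Fin n) ℝ)
    (U : Set (Fin n → ℝ)) : Prop :=
  (∀ i j, ContDiffOn ℝ (⊤ : ℕ∞) (fun x => L x i j) U) ∧
    (∀ x ∈ U, ∀ i j, lowL g L x i j = lowL g L x j i) ∧
    ∀ x ∈ U, ∀ k i j, covL g L k i j x
      = pd (lamL L) i x * g x j k + pd (lamL L) j x * g x i k

/-- `h` is a Casimir of the constant-curvature (curvature `K`) metric `g`: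
`g^{is} (∂_s ∂_j h − Γ^r_{sj} ∂_r h) + K h δ^i_j = 0`. -/
def IsCasimirOn {n : ℕ} (g : (Fin n → ℝ) → Matrix (Fin n) (Fin n) ℝ) (K : ℝ)
    (U : Set (Fin n → ℝ)) (h : (Fin n → ℝ) → ℝ) : Prop :=
  ContDiffOn ℝ (⊤ : ℕ∞) h U ∧
    ∀ x ∈ U, ∀ i j : Fin n,
      (∑ s, (g x)⁻¹ i s * (pd (pd h j) s x - ∑ r, Christoffel g r s j x * pd h r x))
        + K * h x * (if i = j then (1:ℝ) else 0) = 0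

/-- Lie bracket of vector fields: `[v,w]^i = v^s ∂_s w^i − w^s ∂_s v^i`. -/
noncomputable def lieB {n : ℕ} (v w : (Fin n → ℝ) → Fin n → ℝ) (x : Fin n → ℝ) : Fin n → ℝ :=
  fun i => ∑ s, (v x s * pd (fun y => w y i) s x - w x s * pd (fun y => v y i) s x)

/-- Pointwise application of a field of endomorphisms to a vector field. -/
noncomputable def appE {n : ℕ} (L : (Fin n → ℝ) → Matrix (Fin n) (Fin n) ℝ)
    (v : (Fin n → ℝ) → Fin n → ℝ) : (Fin n → ℝ) → Fin n → ℝ :=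
  fun x => (L x).mulVec (v x)

/-- Nijenhuis torsion `N_L(v,w) = L²[v,w] − L[Lv,w] − L[v,Lw] + [Lv,Lw]`. -/
noncomputable def nijT {n : ℕ} (L : (Fin n → ℝ) → Matrix (Fin n) (Fin n) ℝ)
    (v w : (Fin n → ℝ) → Fin n → ℝ) (x : Fin n → ℝ) : Fin n → ℝ :=
  (L x).mulVec ((L x).mulVec (lieB v w x))
    - (L x).mulVec (lieB (appE L v) w x)
    - (L x).mulVec (lieB v (appE L w) x)
    + lieB (appE L v) (appE L w) x

/-- `L` is a Nijenhuis operator on `U`. -/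
def IsNijenhuisOn {n : ℕ} (L : (Fin n → ℝ) → Matrix (Fin n) (Fin n) ℝ)
    (U : Set (Fin n → ℝ)) : Prop :=
  ∀ v w : (Fin n → ℝ) → Fin n → ℝ, ContDiffOn ℝ (⊤ : ℕ∞) v U → ContDiffOn ℝ (⊤ : ℕ∞) w U →
    ∀ x ∈ U, nijT L v w x = 0

/-- Frölicher–Nijenhuis bracket `[[L,M]](v,w)`. -/
noncomputable def fnB {n : ℕ} (L M : (Fin n → ℝ) → Matrix (Fin n) (Fin n) ℝ)
    (v w : (Fin n → ℝ) → Fin n → ℝ) (x : Fin n → ℝ) : Fin n → ℝ :=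
  (L x).mulVec (lieB (appE M v) w x) + (L x).mulVec (lieB v (appE M w) x)
    + (M x).mulVec (lieB (appE L v) w x) + (M x).mulVec (lieB v (appE L w) x)
    - (L x).mulVec ((M x).mulVec (lieB v w x))
    - (M x).mulVec ((L x).mulVec (lieB v w x))
    - lieB (appE L v) (appE M w) x - lieB (appE M v) (appE L w) x

section Aux

variable {n : ℕ}

theorem pd_congr_nhds {f g : (Fin n → ℝ) → ℝ} {x : Fin n → ℝ} (h : f =ᶠ[nhds x] g) (k : Fin n) :
    pd f k x = pd g k x := by unfold pd; rw [h.fderiv_eq]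

theorem pd_add {f g : (Fin n → ℝ) → ℝ} {x : Fin n → ℝ} (hf : DifferentiableAt ℝ f x)
    (hg : DifferentiableAt ℝ g x) (k : Fin n) :
    pd (fun y => f y + g y) k x = pd f k x + pd g k x := by
  unfold pd; rw [fderiv_fun_add hf hg]; simp

theorem pd_mul {f g : (Fin n → ℝ) → ℝ} {x : Fin n → ℝ} (hf : DifferentiableAt ℝ f x)
    (hg : DifferentiableAt ℝ g x) (k : Fin n) :
    pd (fun y => f y * g y) k x = pd f k x * g x + f x * pd g k x := by
  unfold pd; rw [fderiv_fun_mul hf hg]; simp; ring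

theorem pd_sum {ι : Type*} {s : Finset ι} {f : ι → (Fin n → ℝ) → ℝ} {x : Fin n → ℝ}
    (h : ∀ i ∈ s, DifferentiableAt ℝ (f i) x) (k : Fin n) :
    pd (fun y => ∑ i ∈ s, f i y) k x = ∑ i ∈ s, pd (f i) k x := by
  unfold pd; rw [fderiv_fun_sum h]; simp

theorem pd_const {x : Fin n → ℝ} (c : ℝ) (k : Fin n) : pd (fun _ => c) k x = 0 := by
  simp [pd]

theorem pd_constmul {f : (Fin n → ℝ) → ℝ} {x : Fin n → ℝ} (hf : DifferentiableAt ℝ f x)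
    (c : ℝ) (k : Fin n) : pd (fun y => c * f y) k x = c * pd f k x := by
  unfold pd; rw [fderiv_const_mul hf c]; simp

/-- directional derivative of a vector field: `(dvec v x u) i = ∑ s, u s ∂_s v^i (x)`. -/
noncomputable def dvec (v : (Fin n → ℝ) → Fin n → ℝ) (x u : Fin n → ℝ) : Fin n → ℝ :=
  fun i => ∑ s, u s * pd (fun y => v y i) s x

/-- directional derivative of a matrix field. -/
noncomputable def dmat (A : (Fin n → ℝ) → Matrix (Fin n) (Fin n) ℝ) (x u : Fin n → ℝ) :
    Matrix (Fin n) (Fin n) ℝ :=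
  Matrix.of fun i j => ∑ s, u s * pd (fun y => A y i j) s x

theorem dmat_apply (A : (Fin n → ℝ) → Matrix (Fin n) (Fin n) ℝ) (x u : Fin n → ℝ) (i j : Fin n) :
    dmat A x u i j = ∑ s, u s * pd (fun y => A y i j) s x := rfl

theorem dvec_addu (v : (Fin n → ℝ) → Fin n → ℝ) (x u₁ u₂ : Fin n → ℝ) :
    dvec v x (u₁ + u₂) = dvec v x u₁ + dvec v x u₂ := by
  funext i; simp [dvec, add_mul, Finset.sum_add_distrib]

theorem dvec_smulu (v : (Fin n → ℝ) → Fin n → ℝ) (x : Fin n → ℝ) (c : ℝ) (u : Fin n → ℝ) :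
    dvec v x (c • u) = c • dvec v x u := by
  funext i; simp [dvec, Finset.mul_sum, mul_assoc]

theorem dmat_addu (A : (Fin n → ℝ) → Matrix (Fin n) (Fin n) ℝ) (x u₁ u₂ : Fin n → ℝ) :
    dmat A x (u₁ + u₂) = dmat A x u₁ + dmat A x u₂ := by
  ext i j; simp [dmat, add_mul, Finset.sum_add_distrib]

theorem dmat_smulu (A : (Fin n → ℝ) → Matrix (Fin n) (Fin n) ℝ) (x : Fin n → ℝ) (c : ℝ)
    (u : Fin n → ℝ) : dmat A x (c • u) = c • dmat A x u := by
  ext i j; simp [dmat, Finset.mul_sum, mul_assoc]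

/-- `[v,w](x) = D_{v(x)} w − D_{w(x)} v`. -/
theorem lieB_eq (v w : (Fin n → ℝ) → Fin n → ℝ) (x : Fin n → ℝ) :
    lieB v w x = dvec w x (v x) - dvec v x (w x) := by
  funext i; simp [lieB, dvec, Finset.sum_sub_distrib]

theorem pd_appE {B : (Fin n → ℝ) → Matrix (Fin n) (Fin n) ℝ} {w : (Fin n → ℝ) → Fin n → ℝ}
    {x : Fin n → ℝ} (hB : ∀ i j, DifferentiableAt ℝ (fun y => B y i j) x)
    (hw : ∀ i, DifferentiableAt ℝ (fun y => w y i) x) (k i : Fin n) :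
    pd (fun y => appE B w y i) k x
      = ∑ t, (pd (fun y => B y i t) k x * w x t + B x i t * pd (fun y => w y t) k x) := by
  have e : (fun y => appE B w y i) = fun y => ∑ t, B y i t * w y t := by
    funext y; simp [appE, Matrix.mulVec, dotProduct]
  rw [e, pd_sum (fun t _ => (hB i t).fun_mul (hw t)) k]
  exact Finset.sum_congr rfl fun t _ => pd_mul (hB i t) (hw t) k

theorem dvec_appE {B : (Fin n → ℝ) → Matrix (Fin n) (Fin n) ℝ} {w : (Fin n → ℝ) → Fin n → ℝ}
    {x : Fin n → ℝ} (hB : ∀ i j, DifferentiableAt ℝ (fun y => B y i j) x)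
    (hw : ∀ i, DifferentiableAt ℝ (fun y => w y i) x) (u : Fin n → ℝ) :
    dvec (appE B w) x u = (dmat B x u).mulVec (w x) + (B x).mulVec (dvec w x u) := by
  funext i
  have h1 : ∀ s : Fin n, u s * pd (fun y => appE B w y i) s x
      = ∑ t, (u s * pd (fun y => B y i t) s x * w x t
          + B x i t * (u s * pd (fun y => w y t) s x)) := by
    intro s
    rw [pd_appE hB hw s i, Finset.mul_sum]
    exact Finset.sum_congr rfl fun t _ => by ring
  calc dvec (appE B w) x u i = ∑ s, u s * pd (fun y => appE B w y i) s x := rfl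
    _ = ∑ s, ∑ t, (u s * pd (fun y => B y i t) s x * w x t
          + B x i t * (u s * pd (fun y => w y t) s x)) := Finset.sum_congr rfl fun s _ => h1 s
    _ = ∑ t, ∑ s, (u s * pd (fun y => B y i t) s x * w x t
          + B x i t * (u s * pd (fun y => w y t) s x)) := Finset.sum_comm
    _ = _ := by
        simp only [Finset.sum_add_distrib, Pi.add_apply, Matrix.mulVec, dotProduct,
          dmat_apply, dvec, Matrix.of_apply]
        congr 1
        · exact Finset.sum_congr rfl fun t _ => by rw [Finset.sum_mul]
        · exact Finset.sum_congr rfl fun t _ => by rw [Finset.mul_sum]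

theorem appE_appE (A B : (Fin n → ℝ) → Matrix (Fin n) (Fin n) ℝ)
    (v : (Fin n → ℝ) → Fin n → ℝ) :
    appE A (appE B v) = appE (fun y => A y * B y) v := by
  funext y; simp [appE, Matrix.mulVec_mulVec]

theorem appE_apply (A : (Fin n → ℝ) → Matrix (Fin n) (Fin n) ℝ)
    (v : (Fin n → ℝ) → Fin n → ℝ) (x : Fin n → ℝ) : appE A v x = (A x).mulVec (v x) := rfl

theorem dmat_mul {A B : (Fin n → ℝ) → Matrix (Fin n) (Fin n) ℝ} {x : Fin n → ℝ}
    (hA : ∀ i j, DifferentiableAt ℝ (fun y => A y i j) x)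
    (hB : ∀ i j, DifferentiableAt ℝ (fun y => B y i j) x) (u : Fin n → ℝ) :
    dmat (fun y => A y * B y) x u = dmat A x u * B x + A x * dmat B x u := by
  ext i j
  have hpd : ∀ s : Fin n, pd (fun y => (A y * B y) i j) s x
      = ∑ t, (pd (fun y => A y i t) s x * B x t j + A x i t * pd (fun y => B y t j) s x) := by
    intro s
    have e : (fun y => (A y * B y) i j) = fun y => ∑ t, A y i t * B y t j := by
      funext y; simp [Matrix.mul_apply]
    rw [e, pd_sum (fun t _ => (hA i t).fun_mul (hB t j)) s]
    exact Finset.sum_congr rfl fun t _ => pd_mul (hA i t) (hB t j) s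
  have h1 : ∀ s : Fin n, u s * pd (fun y => (A y * B y) i j) s x
      = ∑ t, (u s * pd (fun y => A y i t) s x * B x t j
          + A x i t * (u s * pd (fun y => B y t j) s x)) := by
    intro s; rw [hpd s, Finset.mul_sum]; exact Finset.sum_congr rfl fun t _ => by ring
  calc dmat (fun y => A y * B y) x u i j
      = ∑ s, u s * pd (fun y => (A y * B y) i j) s x := rfl
    _ = ∑ s, ∑ t, (u s * pd (fun y => A y i t) s x * B x t j
          + A x i t * (u s * pd (fun y => B y t j) s x)) := Finset.sum_congr rfl fun s _ => h1 s
    _ = ∑ t, ∑ s, (u s * pd (fun y => A y i t) s x * B x t j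
          + A x i t * (u s * pd (fun y => B y t j) s x)) := Finset.sum_comm
    _ = _ := by
        simp only [Finset.sum_add_distrib, Matrix.add_apply, Matrix.mul_apply, dmat_apply,
          Matrix.of_apply]
        congr 1
        · exact Finset.sum_congr rfl fun t _ => by rw [Finset.sum_mul]
        · exact Finset.sum_congr rfl fun t _ => by rw [Finset.mul_sum]

theorem dmat_pencil {A B : (Fin n → ℝ) → Matrix (Fin n) (Fin n) ℝ} {x : Fin n → ℝ}
    (hA : ∀ i j, DifferentiableAt ℝ (fun y => A y i j) x)
    (hB : ∀ i j, DifferentiableAt ℝ (fun y => B y i j) x) (α β : ℝ) (u : Fin n → ℝ) :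
    dmat (fun y => α • A y + β • B y) x u = α • dmat A x u + β • dmat B x u := by
  ext i j
  have hpd : ∀ s : Fin n, pd (fun y => α * A y i j + β * B y i j) s x
      = α * pd (fun y => A y i j) s x + β * pd (fun y => B y i j) s x := by
    intro s
    rw [pd_add ((hA i j).const_mul α) ((hB i j).const_mul β) s,
      pd_constmul (hA i j) α s, pd_constmul (hB i j) β s]
  simp only [dmat_apply, Matrix.add_apply, Matrix.smul_apply, smul_eq_mul, Matrix.of_apply]
  rw [Finset.mul_sum, Finset.mul_sum, ← Finset.sum_add_distrib]
  exact Finset.sum_congr rfl fun s _ => by rw [hpd s]; ring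

end Aux

section Aux2

variable {n : ℕ}

theorem diffAt_appE {A : (Fin n → ℝ) → Matrix (Fin n) (Fin n) ℝ} {v : (Fin n → ℝ) → Fin n → ℝ}
    {x : Fin n → ℝ} (hA : ∀ i j, DifferentiableAt ℝ (fun y => A y i j) x)
    (hv : ∀ i, DifferentiableAt ℝ (fun y => v y i) x) (i : Fin n) :
    DifferentiableAt ℝ (fun y => appE A v y i) x := by
  have e : (fun y => appE A v y i) = fun y => ∑ t, A y i t * v y t := by
    funext y; simp [appE, Matrix.mulVec, dotProduct]
  rw [e]
  exact DifferentiableAt.fun_sum fun t _ => (hA i t).fun_mul (hv t)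

theorem diffAt_matmul {A B : (Fin n → ℝ) → Matrix (Fin n) (Fin n) ℝ} {x : Fin n → ℝ}
    (hA : ∀ i j, DifferentiableAt ℝ (fun y => A y i j) x)
    (hB : ∀ i j, DifferentiableAt ℝ (fun y => B y i j) x) (i j : Fin n) :
    DifferentiableAt ℝ (fun y => (A y * B y) i j) x := by
  have e : (fun y => (A y * B y) i j) = fun y => ∑ t, A y i t * B y t j := by
    funext y; simp [Matrix.mul_apply]
  rw [e]
  exact DifferentiableAt.fun_sum fun t _ => (hA i t).fun_mul (hB t j)

/-- The key identity: `N_R(Mv, Mw) = N_{RM}(v,w) + R² N_M(v,w) + R [[RM, M]](v,w)`. -/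
theorem key_identity (R M : (Fin n → ℝ) → Matrix (Fin n) (Fin n) ℝ)
    (v w : (Fin n → ℝ) → Fin n → ℝ) (x : Fin n → ℝ)
    (hR : ∀ i j, DifferentiableAt ℝ (fun y => R y i j) x)
    (hM : ∀ i j, DifferentiableAt ℝ (fun y => M y i j) x)
    (hv : ∀ i, DifferentiableAt ℝ (fun y => v y i) x)
    (hw : ∀ i, DifferentiableAt ℝ (fun y => w y i) x) :
    nijT R (appE M v) (appE M w) x
      = nijT (fun y => R y * M y) v w x
        + (R x * R x).mulVec (nijT M v w x)
        + (R x).mulVec (fnB (fun y => R y * M y) M v w x) := by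
  have hRM : ∀ i j, DifferentiableAt ℝ (fun y => (R y * M y) i j) x := diffAt_matmul hR hM
  have hMv : ∀ i, DifferentiableAt ℝ (fun y => appE M v y i) x := diffAt_appE hM hv
  have hMw : ∀ i, DifferentiableAt ℝ (fun y => appE M w y i) x := diffAt_appE hM hw
  simp only [nijT, fnB, lieB_eq]
  simp only [dvec_appE hM hv, dvec_appE hM hw, dvec_appE hR hMv, dvec_appE hR hMw,
    dvec_appE hRM hv, dvec_appE hRM hw, appE_apply]
  simp only [dmat_mul hR hM]
  simp only [Matrix.add_mulVec, Matrix.sub_mulVec, Matrix.mulVec_add, Matrix.mulVec_sub,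
    ← Matrix.mulVec_mulVec]
  abel

end Aux2
section Aux3

variable {n : ℕ}

theorem diffAt_pencil {A B : (Fin n → ℝ) → Matrix (Fin n) (Fin n) ℝ} {x : Fin n → ℝ}
    (hA : ∀ i j, DifferentiableAt ℝ (fun y => A y i j) x)
    (hB : ∀ i j, DifferentiableAt ℝ (fun y => B y i j) x) (α β : ℝ) (i j : Fin n) :
    DifferentiableAt ℝ (fun y => (α • A y + β • B y) i j) x := by
  have e : (fun y => (α • A y + β • B y) i j) = fun y => α * A y i j + β * B y i j := by
    funext y; simp [Matrix.add_apply, Matrix.smul_apply, smul_eq_mul]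
  rw [e]
  exact ((hA i j).const_mul α).add ((hB i j).const_mul β)

/-- Pencil identity: `N_{αL+βM} = α² N_L + β² N_M − αβ [[L,M]]`. -/
theorem pencil_identity (L M : (Fin n → ℝ) → Matrix (Fin n) (Fin n) ℝ)
    (v w : (Fin n → ℝ) → Fin n → ℝ) (x : Fin n → ℝ) (α β : ℝ)
    (hL : ∀ i j, DifferentiableAt ℝ (fun y => L y i j) x)
    (hM : ∀ i j, DifferentiableAt ℝ (fun y => M y i j) x)
    (hv : ∀ i, DifferentiableAt ℝ (fun y => v y i) x)
    (hw : ∀ i, DifferentiableAt ℝ (fun y => w y i) x) :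
    nijT (fun y => α • L y + β • M y) v w x
      = (α ^ 2) • nijT L v w x + (β ^ 2) • nijT M v w x - (α * β) • fnB L M v w x := by
  have hP : ∀ i j, DifferentiableAt ℝ (fun y => (α • L y + β • M y) i j) x :=
    diffAt_pencil hL hM α β
  simp only [nijT, fnB, lieB_eq]
  simp only [dvec_appE hL hv, dvec_appE hL hw, dvec_appE hM hv, dvec_appE hM hw,
    dvec_appE hP hv, dvec_appE hP hw, appE_apply]
  simp only [dmat_pencil hL hM]
  simp only [Matrix.add_mulVec, Matrix.smul_mulVec, Matrix.mulVec_add, Matrix.mulVec_sub,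
    Matrix.sub_mulVec, dvec_addu, dvec_smulu, dmat_addu, dmat_smulu, Matrix.mulVec_smul]
  module

end Aux3

section Aux4

variable {n : ℕ} {U : Set (Fin n → ℝ)}

theorem cdOn_comp {v : (Fin n → ℝ) → Fin n → ℝ} (hv : ContDiffOn ℝ (⊤ : ℕ∞) v U) (i : Fin n) :
    ContDiffOn ℝ (⊤ : ℕ∞) (fun y => v y i) U := by
  exact (ContinuousLinearMap.contDiff (ContinuousLinearMap.proj (R := ℝ)
    (φ := fun _ : Fin n => ℝ) i)).comp_contDiffOn hv

theorem diffAt_of_cdOn {E F : Type*} [NormedAddCommGroup E] [NormedSpace ℝ E]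
    [NormedAddCommGroup F] [NormedSpace ℝ F] {U : Set E} {f : E → F} {x : E}
    (hUo : IsOpen U) (hx : x ∈ U) (hf : ContDiffOn ℝ (⊤ : ℕ∞) f U) : DifferentiableAt ℝ f x :=
  (hf.differentiableOn (by simp)).differentiableAt (hUo.mem_nhds hx)

theorem cdOn_appE {A : (Fin n → ℝ) → Matrix (Fin n) (Fin n) ℝ} {v : (Fin n → ℝ) → Fin n → ℝ}
    (hA : ∀ i j, ContDiffOn ℝ (⊤ : ℕ∞) (fun y => A y i j) U) (hv : ContDiffOn ℝ (⊤ : ℕ∞) v U) :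
    ContDiffOn ℝ (⊤ : ℕ∞) (appE A v) U := by
  apply contDiffOn_pi.2
  intro i
  have e : (fun y => appE A v y i) = fun y => ∑ t, A y i t * v y t := by
    funext y; simp [appE, Matrix.mulVec, dotProduct]
  rw [e]
  exact ContDiffOn.sum fun t _ => (hA i t).mul (cdOn_comp hv t)

theorem cdOn_finset_prod {ι : Type*} (s : Finset ι) (f : ι → (Fin n → ℝ) → ℝ)
    (h : ∀ i ∈ s, ContDiffOn ℝ (⊤ : ℕ∞) (f i) U) :
    ContDiffOn ℝ (⊤ : ℕ∞) (fun y => ∏ i ∈ s, f i y) U := by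
  classical
  induction s using Finset.induction with
  | empty => simpa using contDiffOn_const
  | @insert a s ha ih =>
    simp only [Finset.prod_insert ha]
    exact (h a (Finset.mem_insert_self a s)).mul
      (ih fun i hi => h i (Finset.mem_insert_of_mem hi))

theorem cdOn_det {A : (Fin n → ℝ) → Matrix (Fin n) (Fin n) ℝ}
    (hA : ∀ i j, ContDiffOn ℝ (⊤ : ℕ∞) (fun y => A y i j) U) :
    ContDiffOn ℝ (⊤ : ℕ∞) (fun y => (A y).det) U := by
  have e : (fun y => (A y).det)
      = fun y => ∑ σ : Equiv.Perm (Fin n),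
          ((Equiv.Perm.sign σ : ℤ) : ℝ) * ∏ i, A y (σ i) i := by
    funext y
    rw [Matrix.det_apply]
    exact Finset.sum_congr rfl fun σ _ => by
      simp [Units.smul_def, zsmul_eq_mul]
  rw [e]
  exact ContDiffOn.sum fun σ _ =>
    ContDiffOn.mul contDiffOn_const (cdOn_finset_prod _ _ fun i _ => hA (σ i) i)

theorem cdOn_inv_entry {A : (Fin n → ℝ) → Matrix (Fin n) (Fin n) ℝ}
    (hA : ∀ i j, ContDiffOn ℝ (⊤ : ℕ∞) (fun y => A y i j) U)
    (hdet : ∀ x ∈ U, (A x).det ≠ 0) (i j : Fin n) :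
    ContDiffOn ℝ (⊤ : ℕ∞) (fun y => (A y)⁻¹ i j) U := by
  have hadj : ContDiffOn ℝ (⊤ : ℕ∞) (fun y => (A y).adjugate i j) U := by
    have e : (fun y => (A y).adjugate i j)
        = fun y => ((A y).updateRow j (Pi.single i 1)).det := by
      funext y; rw [Matrix.adjugate_apply]
    rw [e]
    apply cdOn_det
    intro p q
    by_cases hpj : p = j
    · simp only [Matrix.updateRow_apply, hpj, if_true]
      exact contDiffOn_const
    · simp only [Matrix.updateRow_apply, hpj, if_false]
      exact hA p q
  have e : ∀ y ∈ U, (A y)⁻¹ i j = ((A y).det)⁻¹ * (A y).adjugate i j := by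
    intro y _
    rw [Matrix.inv_def]
    simp [Ring.inverse_eq_inv']
  exact ContDiffOn.congr (ContDiffOn.mul ((cdOn_det hA).inv hdet) hadj) e

end Aux4

section Aux5

variable {n : ℕ}

theorem appE_evEq {A A' : (Fin n → ℝ) → Matrix (Fin n) (Fin n) ℝ}
    {v v' : (Fin n → ℝ) → Fin n → ℝ} {x : Fin n → ℝ}
    (hA : A =ᶠ[nhds x] A') (hv : v =ᶠ[nhds x] v') :
    appE A v =ᶠ[nhds x] appE A' v' := by
  filter_upwards [hA, hv] with y h1 h2
  simp [appE, h1, h2]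

theorem lieB_congr {v v' w w' : (Fin n → ℝ) → Fin n → ℝ} {x : Fin n → ℝ}
    (hv : v =ᶠ[nhds x] v') (hw : w =ᶠ[nhds x] w') :
    lieB v w x = lieB v' w' x := by
  have hvi : ∀ i, (fun y => v y i) =ᶠ[nhds x] (fun y => v' y i) :=
    fun i => hv.mono fun y hy => congrFun hy i
  have hwi : ∀ i, (fun y => w y i) =ᶠ[nhds x] (fun y => w' y i) :=
    fun i => hw.mono fun y hy => congrFun hy i
  funext i
  unfold lieB
  apply Finset.sum_congr rfl
  intro s _
  rw [pd_congr_nhds (hvi i) s, pd_congr_nhds (hwi i) s, hv.eq_of_nhds, hw.eq_of_nhds]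

theorem nijT_congr {A A' : (Fin n → ℝ) → Matrix (Fin n) (Fin n) ℝ}
    {v v' w w' : (Fin n → ℝ) → Fin n → ℝ} {x : Fin n → ℝ}
    (hA : A =ᶠ[nhds x] A') (hv : v =ᶠ[nhds x] v') (hw : w =ᶠ[nhds x] w') :
    nijT A v w x = nijT A' v' w' x := by
  unfold nijT
  rw [lieB_congr hv hw, lieB_congr (appE_evEq hA hv) hw, lieB_congr hv (appE_evEq hA hw),
    lieB_congr (appE_evEq hA hv) (appE_evEq hA hw), hA.eq_of_nhds]

theorem fnB_congr {A A' B B' : (Fin n → ℝ) → Matrix (Fin n) (Fin n) ℝ}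
    {v v' w w' : (Fin n → ℝ) → Fin n → ℝ} {x : Fin n → ℝ}
    (hA : A =ᶠ[nhds x] A') (hB : B =ᶠ[nhds x] B')
    (hv : v =ᶠ[nhds x] v') (hw : w =ᶠ[nhds x] w') :
    fnB A B v w x = fnB A' B' v' w' x := by
  unfold fnB
  rw [lieB_congr hv hw, lieB_congr (appE_evEq hA hv) hw, lieB_congr hv (appE_evEq hA hw),
    lieB_congr (appE_evEq hB hv) hw, lieB_congr hv (appE_evEq hB hw),
    lieB_congr (appE_evEq hA hv) (appE_evEq hB hw),
    lieB_congr (appE_evEq hB hv) (appE_evEq hA hw), hA.eq_of_nhds, hB.eq_of_nhds]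

theorem mulVec_eq_zero_of {A : Matrix (Fin n) (Fin n) ℝ} (h : A.det ≠ 0) {y : Fin n → ℝ}
    (h0 : A.mulVec y = 0) : y = 0 := by
  have hu : IsUnit A.det := isUnit_iff_ne_zero.2 h
  have h2 := congrArg (fun z => (A⁻¹).mulVec z) h0
  simpa [Matrix.mulVec_mulVec, Matrix.nonsing_inv_mul _ hu] using h2

end Aux5

/-- for invertible Nijenhuis operators `L₁, L₂`, the whole pencil
`αL₁ + βL₂` is Nijenhuis iff `L₁L₂⁻¹` is Nijenhuis. -/
theorem stmt_5 {n : ℕ} (U : Set (Fin n → ℝ)) (hUo : IsOpen U)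
    (L₁ L₂ : (Fin n → ℝ) → Matrix (Fin n) (Fin n) ℝ)
    (hs₁ : ∀ i j, ContDiffOn ℝ (⊤ : ℕ∞) (fun x => L₁ x i j) U)
    (hs₂ : ∀ i j, ContDiffOn ℝ (⊤ : ℕ∞) (fun x => L₂ x i j) U)
    (hinv₁ : ∀ x ∈ U, (L₁ x).det ≠ 0)
    (hinv₂ : ∀ x ∈ U, (L₂ x).det ≠ 0)
    (hN₁ : IsNijenhuisOn L₁ U) (hN₂ : IsNijenhuisOn L₂ U) :
    (∀ α β : ℝ, IsNijenhuisOn (fun x => α • L₁ x + β • L₂ x) U) ↔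
      IsNijenhuisOn (fun x => L₁ x * (L₂ x)⁻¹) U := by
  have hMinv : ∀ i j, ContDiffOn ℝ (⊤ : ℕ∞) (fun y => (L₂ y)⁻¹ i j) U :=
    fun i j => cdOn_inv_entry hs₂ hinv₂ i j
  set R : (Fin n → ℝ) → Matrix (Fin n) (Fin n) ℝ := fun x => L₁ x * (L₂ x)⁻¹ with hRdef
  have hsR : ∀ i j, ContDiffOn ℝ (⊤ : ℕ∞) (fun y => R y i j) U := by
    intro i j
    have e : (fun y => R y i j) = fun y => ∑ t, L₁ y i t * (L₂ y)⁻¹ t j := by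
      funext y; simp [hRdef, Matrix.mul_apply]
    rw [e]; exact ContDiffOn.sum fun t _ => (hs₁ i t).mul (hMinv t j)
  have hRM : ∀ y ∈ U, R y * L₂ y = L₁ y := by
    intro y hy
    show L₁ y * (L₂ y)⁻¹ * L₂ y = L₁ y
    rw [mul_assoc, Matrix.nonsing_inv_mul _ (isUnit_iff_ne_zero.2 (hinv₂ y hy)), mul_one]
  have hRMev : ∀ x ∈ U, (fun y => R y * L₂ y) =ᶠ[nhds x] L₁ := fun x hx =>
    Filter.eventually_of_mem (hUo.mem_nhds hx) hRM
  constructor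
  · -- pencil Nijenhuis ⟹ L₁L₂⁻¹ Nijenhuis
    intro hpencil v' w' hv' hw' x hx
    set v := appE (fun y => (L₂ y)⁻¹) v' with hvdef
    set w := appE (fun y => (L₂ y)⁻¹) w' with hwdef
    have hv : ContDiffOn ℝ (⊤ : ℕ∞) v U := cdOn_appE hMinv hv'
    have hw : ContDiffOn ℝ (⊤ : ℕ∞) w U := cdOn_appE hMinv hw'
    have dv : ∀ i, DifferentiableAt ℝ (fun y => v y i) x :=
      fun i => diffAt_of_cdOn hUo hx (cdOn_comp hv i)
    have dw : ∀ i, DifferentiableAt ℝ (fun y => w y i) x :=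
      fun i => diffAt_of_cdOn hUo hx (cdOn_comp hw i)
    have dL₁ : ∀ i j, DifferentiableAt ℝ (fun y => L₁ y i j) x :=
      fun i j => diffAt_of_cdOn hUo hx (hs₁ i j)
    have dL₂ : ∀ i j, DifferentiableAt ℝ (fun y => L₂ y i j) x :=
      fun i j => diffAt_of_cdOn hUo hx (hs₂ i j)
    have dR : ∀ i j, DifferentiableAt ℝ (fun y => R y i j) x :=
      fun i j => diffAt_of_cdOn hUo hx (hsR i j)
    have hfnB : fnB L₁ L₂ v w x = 0 := by
      have hp := pencil_identity L₁ L₂ v w x 1 1 dL₁ dL₂ dv dw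
      rw [hpencil 1 1 v w hv hw x hx, hN₁ v w hv hw x hx, hN₂ v w hv hw x hx] at hp
      simpa using hp.symm
    have hkey := key_identity R L₂ v w x dR dL₂ dv dw
    have hvE : appE L₂ v =ᶠ[nhds x] v' := by
      filter_upwards [hUo.mem_nhds hx] with y hy
      show (L₂ y).mulVec ((L₂ y)⁻¹.mulVec (v' y)) = v' y
      rw [Matrix.mulVec_mulVec, Matrix.mul_nonsing_inv _ (isUnit_iff_ne_zero.2 (hinv₂ y hy)),
        Matrix.one_mulVec]
    have hwE : appE L₂ w =ᶠ[nhds x] w' := by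
      filter_upwards [hUo.mem_nhds hx] with y hy
      show (L₂ y).mulVec ((L₂ y)⁻¹.mulVec (w' y)) = w' y
      rw [Matrix.mulVec_mulVec, Matrix.mul_nonsing_inv _ (isUnit_iff_ne_zero.2 (hinv₂ y hy)),
        Matrix.one_mulVec]
    have e1 : nijT R (appE L₂ v) (appE L₂ w) x = nijT R v' w' x :=
      nijT_congr (Filter.EventuallyEq.refl _ _) hvE hwE
    have e2 : nijT (fun y => R y * L₂ y) v w x = nijT L₁ v w x :=
      nijT_congr (hRMev x hx) (Filter.EventuallyEq.refl _ _) (Filter.EventuallyEq.refl _ _)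
    have e3 : fnB (fun y => R y * L₂ y) L₂ v w x = fnB L₁ L₂ v w x :=
      fnB_congr (hRMev x hx) (Filter.EventuallyEq.refl _ _) (Filter.EventuallyEq.refl _ _)
        (Filter.EventuallyEq.refl _ _)
    rw [e1, e2, e3, hN₁ v w hv hw x hx, hN₂ v w hv hw x hx, hfnB] at hkey
    simpa using hkey
  · -- L₁L₂⁻¹ Nijenhuis ⟹ pencil Nijenhuis
    intro hNR α β v w hv hw x hx
    have dv : ∀ i, DifferentiableAt ℝ (fun y => v y i) x :=
      fun i => diffAt_of_cdOn hUo hx (cdOn_comp hv i)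
    have dw : ∀ i, DifferentiableAt ℝ (fun y => w y i) x :=
      fun i => diffAt_of_cdOn hUo hx (cdOn_comp hw i)
    have dL₁ : ∀ i j, DifferentiableAt ℝ (fun y => L₁ y i j) x :=
      fun i j => diffAt_of_cdOn hUo hx (hs₁ i j)
    have dL₂ : ∀ i j, DifferentiableAt ℝ (fun y => L₂ y i j) x :=
      fun i j => diffAt_of_cdOn hUo hx (hs₂ i j)
    have dR : ∀ i j, DifferentiableAt ℝ (fun y => R y i j) x :=
      fun i j => diffAt_of_cdOn hUo hx (hsR i j)
    have hkey := key_identity R L₂ v w x dR dL₂ dv dw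
    have e2 : nijT (fun y => R y * L₂ y) v w x = nijT L₁ v w x :=
      nijT_congr (hRMev x hx) (Filter.EventuallyEq.refl _ _) (Filter.EventuallyEq.refl _ _)
    have e3 : fnB (fun y => R y * L₂ y) L₂ v w x = fnB L₁ L₂ v w x :=
      fnB_congr (hRMev x hx) (Filter.EventuallyEq.refl _ _) (Filter.EventuallyEq.refl _ _)
        (Filter.EventuallyEq.refl _ _)
    rw [hNR (appE L₂ v) (appE L₂ w) (cdOn_appE hs₂ hv) (cdOn_appE hs₂ hw) x hx, e2, e3,
      hN₁ v w hv hw x hx, hN₂ v w hv hw x hx] at hkey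
    have hdetR : (R x).det ≠ 0 := by
      show (L₁ x * (L₂ x)⁻¹).det ≠ 0
      rw [Matrix.det_mul, Matrix.det_nonsing_inv, Ring.inverse_eq_inv']
      exact mul_ne_zero (hinv₁ x hx) (inv_ne_zero (hinv₂ x hx))
    have hf0 : fnB L₁ L₂ v w x = 0 := by
      apply mulVec_eq_zero_of hdetR
      have h := hkey.symm
      simpa using h
    rw [pencil_identity L₁ L₂ v w x α β dL₁ dL₂ dv dw, hN₁ v w hv hw x hx,
      hN₂ v w hv hw x hx, hf0]
    simp
end

section
/- Let g be a metric on a connected open set U ⊆ ℝⁿ (n ≥ 2) whose components g_{ij} are constant in the coordinates x¹,…,xⁿ (so g is flat and its Christoffel symbols vanish). A smooth field of endomorphisms L with L^s_i g_{sj} symmetric is geodesically compatible with g if and only if its contravariant components L^{ij} := L^i_s g^{sj} have the form L^{ij}(x) = a^{ij} + b^i x^j + b^j x^i − K x^i x^j for some constants a^{ij} = a^{ji}, b^i and K. In this case λ^i := g^{is} ∂_s(½ tr L) = b^i − K x^i, and on any open subset where det(L^{ij}) ≠ 0 the metric whose inverse matrix is (L^{ij}) (namely gL⁻¹) has constant curvature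 equal to K. -/
open scoped BigOperators

open Filter Topology

namespace S10

lemma pd_congr {n : ℕ} {f g : (Fin n → ℝ) → ℝ} {x : Fin n → ℝ} (h : f =ᶠ[𝓝 x] g) (k : Fin n) :
    pd f k x = pd g k x := by unfold pd; rw [h.fderiv_eq]

lemma pd_eqOn {n : ℕ} {U : Set (Fin n → ℝ)} (hU : IsOpen U) {f g : (Fin n → ℝ) → ℝ}
    (h : ∀ y ∈ U, f y = g y) {x : Fin n → ℝ} (hx : x ∈ U) (k : Fin n) :
    pd f k x = pd g k x :=
  pd_congr (Filter.eventuallyEq_of_mem (hU.mem_nhds hx) h) k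

lemma pd_const {n : ℕ} (c : ℝ) (k : Fin n) (x : Fin n → ℝ) : pd (fun _ => c) k x = 0 := by
  simp [pd]

lemma pd_coord {n : ℕ} (i k : Fin n) (x : Fin n → ℝ) :
    pd (fun y => y i) k x = if i = k then 1 else 0 := by
  have h : (fun y : Fin n → ℝ => y i)
      = fun y => (ContinuousLinearMap.proj (R := ℝ) (φ := fun _ : Fin n => ℝ) i) y := rfl
  rw [pd, h, ContinuousLinearMap.fderiv]
  simp [ContinuousLinearMap.proj_apply, Pi.single_apply, eq_comm]

lemma pd_add {n : ℕ} {f g : (Fin n → ℝ) → ℝ} {x : Fin n → ℝ}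
    (hf : DifferentiableAt ℝ f x) (hg : DifferentiableAt ℝ g x) (k : Fin n) :
    pd (fun y => f y + g y) k x = pd f k x + pd g k x := by
  simp [pd, fderiv_fun_add hf hg]

lemma pd_sub {n : ℕ} {f g : (Fin n → ℝ) → ℝ} {x : Fin n → ℝ}
    (hf : DifferentiableAt ℝ f x) (hg : DifferentiableAt ℝ g x) (k : Fin n) :
    pd (fun y => f y - g y) k x = pd f k x - pd g k x := by
  simp [pd, fderiv_fun_sub hf hg]

lemma pd_neg {n : ℕ} {f : (Fin n → ℝ) → ℝ} {x : Fin n → ℝ} (k : Fin n) :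
    pd (fun y => -f y) k x = -pd f k x := by
  simp [pd, fderiv_neg]

lemma pd_mul {n : ℕ} {f g : (Fin n → ℝ) → ℝ} {x : Fin n → ℝ}
    (hf : DifferentiableAt ℝ f x) (hg : DifferentiableAt ℝ g x) (k : Fin n) :
    pd (fun y => f y * g y) k x = pd f k x * g x + f x * pd g k x := by
  simp only [pd, fderiv_fun_mul hf hg, ContinuousLinearMap.add_apply,
    ContinuousLinearMap.smul_apply, smul_eq_mul]
  ring

lemma pd_sum {n : ℕ} {ι : Type*} {u : Finset ι} {f : ι → (Fin n → ℝ) → ℝ} {x : Fin n → ℝ}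
    (hf : ∀ i ∈ u, DifferentiableAt ℝ (f i) x) (k : Fin n) :
    pd (fun y => ∑ i ∈ u, f i y) k x = ∑ i ∈ u, pd (f i) k x := by
  simp [pd, fderiv_fun_sum hf]

lemma pd_const_mul {n : ℕ} {f : (Fin n → ℝ) → ℝ} {x : Fin n → ℝ}
    (hf : DifferentiableAt ℝ f x) (c : ℝ) (k : Fin n) :
    pd (fun y => c * f y) k x = c * pd f k x := by
  simp [pd, fderiv_const_mul hf]

lemma pd_mul_const {n : ℕ} {f : (Fin n → ℝ) → ℝ} {x : Fin n → ℝ}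
    (hf : DifferentiableAt ℝ f x) (c : ℝ) (k : Fin n) :
    pd (fun y => f y * c) k x = pd f k x * c := by
  simp only [pd, fderiv_mul_const hf]; simp [mul_comm]


lemma pd_comm {n : ℕ} {f : (Fin n → ℝ) → ℝ} {x : Fin n → ℝ}
    (hf : ContDiffAt ℝ (⊤ : ℕ∞) f x) (k m : Fin n) : pd (pd f k) m x = pd (pd f m) k x := by
  have hd : DifferentiableAt ℝ (fderiv ℝ f) x :=
    (hf.fderiv_right (m := (⊤ : ℕ∞)) (by simp)).differentiableAt (by simp)
  have hsymm := hf.isSymmSndFDerivAt (by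
    simp only [minSmoothness_of_isRCLikeNormedField]; exact WithTop.coe_le_coe.mpr le_top)
  have key : ∀ v w : Fin n → ℝ,
      fderiv ℝ (fun y => fderiv ℝ f y v) x w = fderiv ℝ (fderiv ℝ f) x w v := by
    intro v w
    have h1 : (fun y => fderiv ℝ f y v)
        = fun y => (ContinuousLinearMap.apply ℝ ℝ v) (fderiv ℝ f y) := rfl
    rw [h1]
    have h2 := ((ContinuousLinearMap.apply ℝ ℝ v).hasFDerivAt.comp x hd.hasFDerivAt).fderiv
    rw [show (fun y => ((ContinuousLinearMap.apply ℝ ℝ) v) (fderiv ℝ f y))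
      = (⇑((ContinuousLinearMap.apply ℝ ℝ) v) ∘ fderiv ℝ f) from rfl, h2]; rfl
  show fderiv ℝ (fun y => fderiv ℝ f y (Pi.single k 1)) x (Pi.single m 1)
      = fderiv ℝ (fun y => fderiv ℝ f y (Pi.single m 1)) x (Pi.single k 1)
  rw [key, key]
  exact hsymm _ _

lemma fderiv_eq_zero_of_pd {n : ℕ} {f : (Fin n → ℝ) → ℝ} {x : Fin n → ℝ}
    (h : ∀ k, pd f k x = 0) : fderiv ℝ f x = 0 := by
  ext v
  have hv : v = ∑ i, v i • (Pi.single i (1:ℝ) : Fin n → ℝ) := by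
    ext j; simp [Pi.single_apply]
  rw [ContinuousLinearMap.zero_apply, hv, map_sum]
  simp only [map_smul]
  refine Finset.sum_eq_zero fun i _ => ?_
  have := h i
  simp only [pd] at this
  simp [this]

lemma eq_const_of_pd_zero {n : ℕ} {U : Set (Fin n → ℝ)} (hUo : IsOpen U)
    (hUc : IsPreconnected U) {f : (Fin n → ℝ) → ℝ}
    (hf : ∀ y ∈ U, DifferentiableAt ℝ f y) (h0 : ∀ y ∈ U, ∀ k, pd f k y = 0)
    {x y : Fin n → ℝ} (hx : x ∈ U) (hy : y ∈ U) : f x = f y := by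
  have hloc : ∀ z ∈ U, ∀ᶠ w in 𝓝 z, f w = f z := by
    intro z hz
    obtain ⟨ε, hε, hball⟩ := Metric.isOpen_iff.1 hUo z hz
    filter_upwards [Metric.ball_mem_nhds z hε] with w hw
    refine (convex_ball z ε).is_const_of_fderivWithin_eq_zero
      (fun p hp => (hf p (hball hp)).differentiableWithinAt) ?_ hw (Metric.mem_ball_self hε)
    intro p hp
    rw [fderivWithin_of_isOpen Metric.isOpen_ball hp]
    exact fderiv_eq_zero_of_pd (h0 p (hball hp))
  -- clopen argument
  classical
  set S := {z | ∀ᶠ w in 𝓝 z, f w = f x} with hS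
  have hSopen : IsOpen S := by
    refine isOpen_iff_mem_nhds.2 fun z hz => ?_
    obtain ⟨t, htz, hto, hzt⟩ := eventually_nhds_iff.1 hz
    filter_upwards [hto.mem_nhds hzt] with w hw
    exact eventually_nhds_iff.2 ⟨t, htz, hto, hw⟩
  set T := {z ∈ U | ¬ f z = f x} with hT
  have hTopen : IsOpen T := by
    refine isOpen_iff_mem_nhds.2 fun z hz => ?_
    obtain ⟨hzU, hzne⟩ := hz
    filter_upwards [hloc z hzU, hUo.mem_nhds hzU] with w hw hwU
    exact ⟨hwU, by rw [hw]; exact hzne⟩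
  have hcover : U ⊆ S ∪ T := by
    intro z hz
    by_cases hc : f z = f x
    · left
      filter_upwards [hloc z hz] with w hw using hw.trans hc
    · exact Or.inr ⟨hz, hc⟩
  have hSx : (U ∩ S).Nonempty := ⟨x, hx, hloc x hx⟩
  by_contra hne
  have hTy : (U ∩ T).Nonempty := ⟨y, hy, hy, fun h => hne h.symm⟩
  obtain ⟨z, hzU, hzS, hzT⟩ := hUc S T hSopen hTopen hcover hSx hTy
  exact hzT.2 hzS.self_of_nhds

lemma diffAt_finset_prod {n : ℕ} {ι : Type*} [DecidableEq ι] {u : Finset ι}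
    {f : ι → (Fin n → ℝ) → ℝ} {x : Fin n → ℝ}
    (h : ∀ i ∈ u, DifferentiableAt ℝ (f i) x) :
    DifferentiableAt ℝ (fun y => ∏ i ∈ u, f i y) x := by
  induction u using Finset.induction with
  | empty => simpa using differentiableAt_const (1:ℝ)
  | @insert a u hni ih =>
    simp only [Finset.prod_insert hni]
    exact (h a (Finset.mem_insert_self a u)).mul
      (ih fun i hi => h i (Finset.mem_insert_of_mem hi))

lemma diffAt_det {n m : ℕ} {A : (Fin n → ℝ) → Matrix (Fin m) (Fin m) ℝ} {x : Fin n → ℝ}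
    (h : ∀ p q, DifferentiableAt ℝ (fun y => A y p q) x) :
    DifferentiableAt ℝ (fun y => (A y).det) x := by
  have hrw : (fun y => (A y).det)
      = fun y => ∑ σ : Equiv.Perm (Fin m),
          ((Equiv.Perm.sign σ : ℤ) : ℝ) * ∏ i, A y (σ i) i := by
    funext y; rw [Matrix.det_apply']
  rw [hrw]
  exact DifferentiableAt.fun_sum fun σ _ =>
    (diffAt_finset_prod fun i _ => h (σ i) i).const_mul _

lemma diffAt_inv_entry {n m : ℕ} {A : (Fin n → ℝ) → Matrix (Fin m) (Fin m) ℝ} {x : Fin n → ℝ}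
    (h : ∀ p q, DifferentiableAt ℝ (fun y => A y p q) x)
    (hdet : (A x).det ≠ 0) (p q : Fin m) :
    DifferentiableAt ℝ (fun y => (A y)⁻¹ p q) x := by
  have hrw : (fun y => (A y)⁻¹ p q)
      = fun y => ((A y).det)⁻¹ * ((A y).updateRow q (Pi.single p 1)).det := by
    funext y
    rw [Matrix.inv_def, Matrix.smul_apply, Matrix.adjugate_apply, Ring.inverse_eq_inv',
      smul_eq_mul]
  rw [hrw]
  refine ((diffAt_det h).inv hdet).mul (diffAt_det fun r s => ?_)
  by_cases hr : r = q
  · subst hr; simpa [Matrix.updateRow_apply] using differentiableAt_const _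
  · simpa only [Matrix.updateRow_apply, if_neg hr] using h r s


/-! ### The quadratic matrix family -/

noncomputable def Mf {n : ℕ} (a : Matrix (Fin n) (Fin n) ℝ) (b : Fin n → ℝ) (K : ℝ)
    (x : Fin n → ℝ) : Matrix (Fin n) (Fin n) ℝ :=
  Matrix.of fun i j => a i j + b i * x j + b j * x i - K * (x i * x j)

noncomputable def cf {n : ℕ} (b : Fin n → ℝ) (K : ℝ) (i : Fin n) (x : Fin n → ℝ) : ℝ :=
  b i - K * x i

noncomputable def hf {n : ℕ} (a : Matrix (Fin n) (Fin n) ℝ) (b : Fin n → ℝ) (K : ℝ)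
    (x : Fin n → ℝ) : Matrix (Fin n) (Fin n) ℝ :=
  (Mf a b K x)⁻¹

noncomputable def muf {n : ℕ} (a : Matrix (Fin n) (Fin n) ℝ) (b : Fin n → ℝ) (K : ℝ)
    (p : Fin n) (x : Fin n → ℝ) : ℝ :=
  ∑ t, hf a b K x p t * cf b K t x

variable {n : ℕ} {a : Matrix (Fin n) (Fin n) ℝ} {b : Fin n → ℝ} {K : ℝ} {x : Fin n → ℝ}

lemma Mf_apply (i j : Fin n) :
    Mf a b K x i j = a i j + b i * x j + b j * x i - K * (x i * x j) := rfl

lemma Mf_diff (i j : Fin n) : DifferentiableAt ℝ (fun y => Mf a b K y i j) x := by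
  simp only [Mf, Matrix.of_apply]
  fun_prop

lemma cf_diff (i : Fin n) : DifferentiableAt ℝ (cf b K i) x := by
  unfold cf; fun_prop

lemma pd_Mf (i j k : Fin n) :
    pd (fun y => Mf a b K y i j) k x
      = cf b K i x * (if j = k then 1 else 0) + cf b K j x * (if i = k then 1 else 0) := by
  have h1 : (fun y : Fin n → ℝ => Mf a b K y i j)
      = fun y => a i j + b i * y j + b j * y i - K * (y i * y j) := rfl
  rw [h1]
  rw [pd_sub (by fun_prop) (by fun_prop)]
  rw [pd_add (by fun_prop) (by fun_prop)]
  rw [pd_add (by fun_prop) (by fun_prop)]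
  rw [pd_const, pd_const_mul (by fun_prop), pd_const_mul (by fun_prop),
    pd_const_mul (by fun_prop), pd_mul (by fun_prop) (by fun_prop),
    pd_coord, pd_coord]
  unfold cf; ring

lemma pd_cf (l k : Fin n) :
    pd (cf b K l) k x = -(K * (if l = k then 1 else 0)) := by
  unfold cf
  rw [pd_sub (by fun_prop) (by fun_prop), pd_const, pd_const_mul (by fun_prop), pd_coord]
  ring

lemma Mf_symm (ha : a.IsSymm) (i j : Fin n) : Mf a b K x i j = Mf a b K x j i := by
  simp only [Mf_apply, ha.apply]
  ring

lemma hf_symm (ha : a.IsSymm) (p q : Fin n) : hf a b K x p q = hf a b K x q p := by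
  have h : (Mf a b K x).transpose = Mf a b K x := by
    ext i j; simp [Matrix.transpose_apply, Mf_symm ha]
  have h2 := Matrix.transpose_nonsing_inv (Mf a b K x)
  rw [h] at h2
  calc hf a b K x p q = ((Mf a b K x)⁻¹).transpose q p := rfl
    _ = hf a b K x q p := by rw [h2]; rfl

lemma hf_diff (hdet : (Mf a b K x).det ≠ 0) (p q : Fin n) :
    DifferentiableAt ℝ (fun y => hf a b K y p q) x :=
  diffAt_inv_entry (fun p q => Mf_diff p q) hdet p q

lemma Mh_one (hdet : (Mf a b K x).det ≠ 0) (i j : Fin n) :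
    ∑ s, Mf a b K x i s * hf a b K x s j = if i = j then 1 else 0 := by
  unfold hf
  rw [← Matrix.mul_apply, Matrix.mul_nonsing_inv _ (isUnit_iff_ne_zero.2 hdet), Matrix.one_apply]

lemma hM_one (hdet : (Mf a b K x).det ≠ 0) (i j : Fin n) :
    ∑ s, hf a b K x i s * Mf a b K x s j = if i = j then 1 else 0 := by
  unfold hf
  rw [← Matrix.mul_apply, Matrix.nonsing_inv_mul _ (isUnit_iff_ne_zero.2 hdet), Matrix.one_apply]


lemma muf_eq (ha : a.IsSymm) (q : Fin n) :
    ∑ s, cf b K s x * hf a b K x s q = muf a b K q x := by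
  unfold muf
  refine Finset.sum_congr rfl fun s _ => ?_
  rw [hf_symm ha s q, mul_comm]

lemma pd_h {V : Set (Fin n → ℝ)} (hV : IsOpen V)
    (hdetV : ∀ y ∈ V, (Mf a b K y).det ≠ 0) (hx : x ∈ V) (ha : a.IsSymm) (p q k : Fin n) :
    pd (fun y => hf a b K y p q) k x
      = -(muf a b K p x * hf a b K x k q + muf a b K q x * hf a b K x p k) := by
  have hdet := hdetV x hx
  set Dh : Fin n → Fin n → ℝ := fun s j => pd (fun y => hf a b K y s j) k x with hDh
  have step1 : ∀ i j : Fin n,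
      ∑ s, (pd (fun y => Mf a b K y i s) k x * hf a b K x s j
        + Mf a b K x i s * Dh s j) = 0 := by
    intro i j
    have e1 : pd (fun y => ∑ s, Mf a b K y i s * hf a b K y s j) k x = 0 := by
      rw [pd_eqOn hV (g := fun _ => if i = j then (1:ℝ) else 0)
        (fun y hy => Mh_one (hdetV y hy) i j) hx k]
      exact pd_const _ _ _
    rw [pd_sum (fun s _ => (Mf_diff i s).fun_mul (hf_diff hdet s j))] at e1
    rw [← e1]
    refine Finset.sum_congr rfl fun s _ => ?_
    rw [pd_mul (Mf_diff i s) (hf_diff hdet s j)]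
  have Ei : ∀ i j : Fin n, ∑ s, Mf a b K x i s * Dh s j
      = -(cf b K i x * hf a b K x k j
          + (if i = k then (1:ℝ) else 0) * (∑ s, cf b K s x * hf a b K x s j)) := by
    intro i j
    have e2 := step1 i j
    rw [Finset.sum_add_distrib] at e2
    have e3 : ∑ s, pd (fun y => Mf a b K y i s) k x * hf a b K x s j
        = cf b K i x * hf a b K x k j
          + (if i = k then (1:ℝ) else 0) * (∑ s, cf b K s x * hf a b K x s j) := by
      have : ∀ s : Fin n, pd (fun y => Mf a b K y i s) k x * hf a b K x s j
          = cf b K i x * ((if s = k then (1:ℝ) else 0) * hf a b K x s j)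
            + (if i = k then (1:ℝ) else 0) * (cf b K s x * hf a b K x s j) := by
        intro s; rw [pd_Mf]; ring
      rw [Finset.sum_congr rfl fun s _ => this s, Finset.sum_add_distrib,
        ← Finset.mul_sum, ← Finset.mul_sum]
      congr 1
      congr 1
      simp [ite_mul, Finset.sum_ite_eq]
    linarith [e2, e3.symm]
  have key : Dh p q = ∑ i, hf a b K x p i * (∑ s, Mf a b K x i s * Dh s q) := by
    have swap : ∑ i, hf a b K x p i * (∑ s, Mf a b K x i s * Dh s q)
        = ∑ s, (∑ i, hf a b K x p i * Mf a b K x i s) * Dh s q := by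
      simp only [Finset.mul_sum, Finset.sum_mul]
      rw [Finset.sum_comm]
      congr 1; funext s2; congr 1; funext i2; ring
    rw [swap]
    have : ∀ s : Fin n, (∑ i, hf a b K x p i * Mf a b K x i s) * Dh s q
        = (if p = s then (1:ℝ) else 0) * Dh s q := by
      intro s; rw [hM_one hdet]
    rw [Finset.sum_congr rfl fun s _ => this s]
    simp [ite_mul, Finset.sum_ite_eq]
  show Dh p q = _
  rw [key]
  have : ∀ i : Fin n, hf a b K x p i * (∑ s, Mf a b K x i s * Dh s q)
      = -(hf a b K x p i * cf b K i x * hf a b K x k q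
          + (if i = k then (1:ℝ) else 0) * hf a b K x p i * (∑ s, cf b K s x * hf a b K x s q)) := by
    intro i; rw [Ei i q]; ring
  rw [Finset.sum_congr rfl fun i _ => this i]
  rw [Finset.sum_neg_distrib, Finset.sum_add_distrib]
  have e4 : ∑ i, hf a b K x p i * cf b K i x * hf a b K x k q
      = muf a b K p x * hf a b K x k q := by
    rw [← Finset.sum_mul]; rfl
  have e5 : ∑ i, (if i = k then (1:ℝ) else 0) * hf a b K x p i
        * (∑ s, cf b K s x * hf a b K x s q)
      = muf a b K q x * hf a b K x p k := by
    rw [Finset.sum_congr rfl (fun i _ => by rw [muf_eq ha q])]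
    rw [← Finset.sum_mul]
    simp [ite_mul, Finset.sum_ite_eq']
    ring
  rw [e4, e5]



lemma Mmu (hdet : (Mf a b K x).det ≠ 0) (l : Fin n) :
    ∑ s, Mf a b K x l s * muf a b K s x = cf b K l x := by
  unfold muf
  have : ∑ s, Mf a b K x l s * ∑ t, hf a b K x s t * cf b K t x
      = ∑ t, (∑ s, Mf a b K x l s * hf a b K x s t) * cf b K t x := by
    simp only [Finset.mul_sum, Finset.sum_mul]
    rw [Finset.sum_comm]
    congr 1; funext t; congr 1; funext s; ring
  rw [this]
  rw [Finset.sum_congr rfl fun t _ => by rw [Mh_one hdet]]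
  simp [ite_mul, Finset.sum_ite_eq]

lemma christoffel_val {V : Set (Fin n → ℝ)} (hV : IsOpen V)
    (hdetV : ∀ y ∈ V, (Mf a b K y).det ≠ 0) (ha : a.IsSymm) (hx : x ∈ V) (l i k : Fin n) :
    Christoffel (fun y => hf a b K y) l i k x = -(cf b K l x * hf a b K x i k) := by
  have hdet := hdetV x hx
  unfold Christoffel
  have hinv : (hf a b K x)⁻¹ = Mf a b K x :=
    Matrix.nonsing_inv_nonsing_inv _ (isUnit_iff_ne_zero.2 hdet)
  have hterm : ∀ s : Fin n,
      (hf a b K x)⁻¹ l s *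
        (pd (fun y => hf a b K y s k) i x + pd (fun y => hf a b K y s i) k x
          - pd (fun y => hf a b K y i k) s x)
      = Mf a b K x l s * muf a b K s x * (-2 * hf a b K x i k) := by
    intro s
    rw [hinv, pd_h hV hdetV hx ha, pd_h hV hdetV hx ha, pd_h hV hdetV hx ha,
      hf_symm ha s i, hf_symm ha k i]
    ring
  rw [Finset.sum_congr rfl fun s _ => hterm s, ← Finset.sum_mul, Mmu hdet]
  ring

lemma pd_christoffel {V : Set (Fin n → ℝ)} (hV : IsOpen V)
    (hdetV : ∀ y ∈ V, (Mf a b K y).det ≠ 0) (ha : a.IsSymm) (hx : x ∈ V) (l i k' j : Fin n) :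
    pd (Christoffel (fun y => hf a b K y) l i k') j x
      = K * (if l = j then 1 else 0) * hf a b K x i k'
        + cf b K l x * (muf a b K i x * hf a b K x j k'
            + muf a b K k' x * hf a b K x i j) := by
  rw [pd_eqOn hV (g := fun y => -(cf b K l y * hf a b K y i k'))
    (fun y hy => christoffel_val hV hdetV ha hy l i k') hx j]
  rw [pd_neg, pd_mul (cf_diff l) (hf_diff (hdetV x hx) i k'), pd_cf,
    pd_h hV hdetV hx ha]
  ring

lemma curv_val {V : Set (Fin n → ℝ)} (hV : IsOpen V)
    (hdetV : ∀ y ∈ V, (Mf a b K y).det ≠ 0) (ha : a.IsSymm) (hx : x ∈ V) (l i j k : Fin n) :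
    Curv (fun y => hf a b K y) l i j k x
      = K * ((if l = j then 1 else 0) * hf a b K x i k
          - (if l = k then 1 else 0) * hf a b K x i j) := by
  unfold Curv
  rw [pd_christoffel hV hdetV ha hx, pd_christoffel hV hdetV ha hx]
  have hterm : ∀ s : Fin n,
      Christoffel (fun y => hf a b K y) l j s x * Christoffel (fun y => hf a b K y) s i k x
        - Christoffel (fun y => hf a b K y) l k s x * Christoffel (fun y => hf a b K y) s i j x
      = cf b K l x * (hf a b K x j s * cf b K s x) * hf a b K x i k
        - cf b K l x * (hf a b K x k s * cf b K s x) * hf a b K x i j := by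
    intro s
    rw [christoffel_val hV hdetV ha hx, christoffel_val hV hdetV ha hx,
      christoffel_val hV hdetV ha hx, christoffel_val hV hdetV ha hx]
    ring
  rw [Finset.sum_congr rfl fun s _ => hterm s, Finset.sum_sub_distrib,
    ← Finset.sum_mul, ← Finset.sum_mul, ← Finset.mul_sum, ← Finset.mul_sum]
  unfold muf at *
  rw [hf_symm ha k j]
  ring

lemma constCurv_hf (ha : a.IsSymm) {V : Set (Fin n → ℝ)} (hV : IsOpen V)
    (hdetV : ∀ y ∈ V, (Mf a b K y).det ≠ 0) :
    HasConstCurvOn (fun y => hf a b K y) V K := by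
  intro x hx i j k m
  have hdet := hdetV x hx
  have hinv : (hf a b K x)⁻¹ = Mf a b K x :=
    Matrix.nonsing_inv_nonsing_inv _ (isUnit_iff_ne_zero.2 hdet)
  have hterm : ∀ s : Fin n,
      (hf a b K x)⁻¹ j s * Curv (fun y => hf a b K y) i s k m x
      = K * ((if i = k then 1 else 0) * (Mf a b K x j s * hf a b K x s m)
          - (if i = m then 1 else 0) * (Mf a b K x j s * hf a b K x s k)) := by
    intro s
    rw [hinv, curv_val hV hdetV ha hx]
    ring
  rw [Finset.sum_congr rfl fun s _ => hterm s, ← Finset.mul_sum, Finset.sum_sub_distrib,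
    ← Finset.mul_sum, ← Finset.mul_sum, Mh_one hdet, Mh_one hdet]

lemma christoffel_congrOn {g1 g2 : (Fin n → ℝ) → Matrix (Fin n) (Fin n) ℝ}
    {V : Set (Fin n → ℝ)} (hV : IsOpen V) (h : ∀ y ∈ V, g1 y = g2 y) (hx : x ∈ V)
    (i j k : Fin n) : Christoffel g1 i j k x = Christoffel g2 i j k x := by
  unfold Christoffel
  rw [h x hx]
  refine congrArg _ (Finset.sum_congr rfl fun s _ => ?_)
  have p1 : pd (fun y => g1 y s k) j x = pd (fun y => g2 y s k) j x :=
    pd_eqOn hV (fun y hy => by rw [h y hy]) hx j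
  have p2 : pd (fun y => g1 y s j) k x = pd (fun y => g2 y s j) k x :=
    pd_eqOn hV (fun y hy => by rw [h y hy]) hx k
  have p3 : pd (fun y => g1 y j k) s x = pd (fun y => g2 y j k) s x :=
    pd_eqOn hV (fun y hy => by rw [h y hy]) hx s
  rw [p1, p2, p3]

lemma curv_congrOn {g1 g2 : (Fin n → ℝ) → Matrix (Fin n) (Fin n) ℝ}
    {V : Set (Fin n → ℝ)} (hV : IsOpen V) (h : ∀ y ∈ V, g1 y = g2 y) (hx : x ∈ V)
    (l i j k : Fin n) : Curv g1 l i j k x = Curv g2 l i j k x := by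
  unfold Curv
  rw [pd_eqOn hV (g := Christoffel g2 l i k)
      (fun y hy => christoffel_congrOn hV h hy l i k) hx,
    pd_eqOn hV (g := Christoffel g2 l i j)
      (fun y hy => christoffel_congrOn hV h hy l i j) hx]
  refine congrArg _ (Finset.sum_congr rfl fun s _ => ?_)
  rw [christoffel_congrOn hV h hx, christoffel_congrOn hV h hx,
    christoffel_congrOn hV h hx, christoffel_congrOn hV h hx]

lemma hasConstCurvOn_congr {g1 g2 : (Fin n → ℝ) → Matrix (Fin n) (Fin n) ℝ}
    {V : Set (Fin n → ℝ)} (hV : IsOpen V) (h : ∀ y ∈ V, g1 y = g2 y) {K' : ℝ}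
    (hg2 : HasConstCurvOn g2 V K') : HasConstCurvOn g1 V K' := by
  intro x hx i j k m
  rw [← hg2 x hx i j k m]
  rw [h x hx]
  exact Finset.sum_congr rfl fun s _ => by rw [curv_congrOn hV h hx]


lemma contDiffAt_pd {f : (Fin n → ℝ) → ℝ} (hf : ContDiffAt ℝ (⊤ : ℕ∞) f x) (s : Fin n) :
    ContDiffAt ℝ (⊤ : ℕ∞) (pd f s) x := by
  have h1 : ContDiffAt ℝ (⊤ : ℕ∞) (fderiv ℝ f) x := hf.fderiv_right (m := (⊤ : ℕ∞)) (by simp)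
  have h2 : pd f s = fun y =>
      (ContinuousLinearMap.apply ℝ ℝ (Pi.single s (1:ℝ) : Fin n → ℝ)) (fderiv ℝ f y) := rfl
  rw [h2]
  exact ((ContinuousLinearMap.apply ℝ ℝ _).contDiff.contDiffAt).comp x h1

lemma christoffel_const (g0 : Matrix (Fin n) (Fin n) ℝ) (i j k : Fin n) (x : Fin n → ℝ) :
    Christoffel (fun _ => g0) i j k x = 0 := by
  unfold Christoffel
  simp [pd_const]

lemma covL_const (g0 : Matrix (Fin n) (Fin n) ℝ) (L : (Fin n → ℝ) → Matrix (Fin n) (Fin n) ℝ)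
    (k i j : Fin n) (x : Fin n → ℝ) :
    covL (fun _ => g0) L k i j x = pd (fun y => lowL (fun _ => g0) L y i j) k x := by
  unfold covL
  simp [christoffel_const]

section g0sec

variable {g0 : Matrix (Fin n) (Fin n) ℝ} {L : (Fin n → ℝ) → Matrix (Fin n) (Fin n) ℝ}

lemma g0inv_symm (hsym : g0.IsSymm) (i j : Fin n) : g0⁻¹ i j = g0⁻¹ j i := by
  have h2 := Matrix.transpose_nonsing_inv g0
  rw [hsym.eq] at h2
  calc g0⁻¹ i j = g0⁻¹.transpose j i := rfl
    _ = g0⁻¹ j i := by rw [h2]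

lemma g0_mul_inv (hdet : g0.det ≠ 0) (i j : Fin n) :
    ∑ s, g0 i s * g0⁻¹ s j = if i = j then 1 else 0 := by
  rw [← Matrix.mul_apply, Matrix.mul_nonsing_inv _ (isUnit_iff_ne_zero.2 hdet),
    Matrix.one_apply]

lemma g0_inv_mul (hdet : g0.det ≠ 0) (i j : Fin n) :
    ∑ s, g0⁻¹ i s * g0 s j = if i = j then 1 else 0 := by
  rw [← Matrix.mul_apply, Matrix.nonsing_inv_mul _ (isUnit_iff_ne_zero.2 hdet),
    Matrix.one_apply]

lemma L_from_lowL (hdet : g0.det ≠ 0) (y : Fin n → ℝ) (i s : Fin n) :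
    L y i s = ∑ q, lowL (fun _ => g0) L y s q * g0⁻¹ q i := by
  unfold lowL
  have : ∑ q, (∑ p, L y p s * g0 p q) * g0⁻¹ q i
      = ∑ p, L y p s * ∑ q, g0 p q * g0⁻¹ q i := by
    simp only [Finset.sum_mul, Finset.mul_sum]
    rw [Finset.sum_comm]
    congr 1; funext p; congr 1; funext q; ring
  rw [this, Finset.sum_congr rfl fun p _ => by rw [g0_mul_inv hdet]]
  simp [mul_ite, Finset.sum_ite_eq']

lemma Mentry_from_lowL (hdet : g0.det ≠ 0) (y : Fin n → ℝ) (i j : Fin n) :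
    (L y * g0⁻¹) i j
      = ∑ s, ∑ q, g0⁻¹ q i * g0⁻¹ s j * lowL (fun _ => g0) L y s q := by
  rw [Matrix.mul_apply]
  refine Finset.sum_congr rfl fun s _ => ?_
  rw [L_from_lowL (L := L) hdet y i s, Finset.sum_mul]
  exact Finset.sum_congr rfl fun q _ => by ring

end g0sec

section converse

variable {g0 : Matrix (Fin n) (Fin n) ℝ} {L : (Fin n → ℝ) → Matrix (Fin n) (Fin n) ℝ}
  {U : Set (Fin n → ℝ)}

lemma L_eq_Mf_mul (hg0det : g0.det ≠ 0)
    (hform : ∀ x ∈ U, ∀ i j, (L x * g0⁻¹) i j = Mf a b K x i j)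
    {y : Fin n → ℝ} (hy : y ∈ U) : L y = Mf a b K y * g0 := by
  have h1 : L y * g0⁻¹ = Mf a b K y := Matrix.ext fun i j => hform y hy i j
  rw [← h1, Matrix.mul_assoc, Matrix.nonsing_inv_mul _ (isUnit_iff_ne_zero.2 hg0det),
    Matrix.mul_one]

lemma pd_lamL_of_form (hUo : IsOpen U) (hg0sym : g0.IsSymm) (hg0det : g0.det ≠ 0)
    (hform : ∀ x ∈ U, ∀ i j, (L x * g0⁻¹) i j = Mf a b K x i j)
    (hx : x ∈ U) (i : Fin n) :
    pd (lamL L) i x = ∑ t, cf b K t x * g0 t i := by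
  have hlam : ∀ y ∈ U, lamL L y = (1/2) * ∑ p, ∑ t, Mf a b K y p t * g0 t p := by
    intro y hy
    unfold lamL
    congr 1
    refine Finset.sum_congr rfl fun p _ => ?_
    rw [L_eq_Mf_mul hg0det hform hy, Matrix.mul_apply]
  rw [pd_eqOn hUo hlam hx i]
  rw [pd_const_mul (by
    exact DifferentiableAt.fun_sum fun p _ =>
      DifferentiableAt.fun_sum fun t _ => (Mf_diff p t).mul_const _)]
  rw [pd_sum (fun p _ => DifferentiableAt.fun_sum fun t _ => (Mf_diff p t).mul_const _) i]
  have step : ∀ p : Fin n, pd (fun y => ∑ t, Mf a b K y p t * g0 t p) i x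
      = ∑ t, (cf b K p x * (if t = i then (1:ℝ) else 0)
          + cf b K t x * (if p = i then (1:ℝ) else 0)) * g0 t p := by
    intro p
    rw [pd_sum (fun t _ => (Mf_diff p t).mul_const _) i]
    exact Finset.sum_congr rfl fun t _ => by rw [pd_mul_const (Mf_diff p t), pd_Mf]
  rw [Finset.sum_congr rfl fun p _ => step p]
  have expand : ∀ p : Fin n,
      ∑ t, (cf b K p x * (if t = i then (1:ℝ) else 0)
        + cf b K t x * (if p = i then (1:ℝ) else 0)) * g0 t p
      = cf b K p x * g0 i p + (if p = i then (1:ℝ) else 0) * (∑ t, cf b K t x * g0 t p) := by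
    intro p
    rw [Finset.sum_congr rfl fun t _ => by
      rw [show (cf b K p x * (if t = i then (1:ℝ) else 0)
        + cf b K t x * (if p = i then (1:ℝ) else 0)) * g0 t p
        = cf b K p x * ((if t = i then (1:ℝ) else 0) * g0 t p)
          + (if p = i then (1:ℝ) else 0) * (cf b K t x * g0 t p) from by ring]]
    rw [Finset.sum_add_distrib, ← Finset.mul_sum, ← Finset.mul_sum]
    congr 2
    simp [ite_mul, Finset.sum_ite_eq]
  rw [Finset.sum_congr rfl fun p _ => expand p, Finset.sum_add_distrib]
  have e1 : ∑ p, (if p = i then (1:ℝ) else 0) * (∑ t, cf b K t x * g0 t p)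
      = ∑ t, cf b K t x * g0 t i := by
    simp [ite_mul, Finset.sum_ite_eq']
  have e2 : ∑ p, cf b K p x * g0 i p = ∑ t, cf b K t x * g0 t i := by
    refine Finset.sum_congr rfl fun p _ => ?_
    rw [hg0sym.apply]
  rw [e1, e2]
  ring

lemma pd_lowL_of_form (hUo : IsOpen U) (hg0sym : g0.IsSymm) (hg0det : g0.det ≠ 0)
    (hform : ∀ x ∈ U, ∀ i j, (L x * g0⁻¹) i j = Mf a b K x i j)
    (hx : x ∈ U) (k i j : Fin n) :
    pd (fun y => lowL (fun _ => g0) L y i j) k x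
      = (∑ t, cf b K t x * g0 t j) * g0 k i + (∑ t, cf b K t x * g0 t i) * g0 k j := by
  have hlow : ∀ y ∈ U, lowL (fun _ => g0) L y i j
      = ∑ s, (∑ t, Mf a b K y s t * g0 t i) * g0 s j := by
    intro y hy
    unfold lowL
    refine Finset.sum_congr rfl fun s _ => ?_
    rw [L_eq_Mf_mul hg0det hform hy, Matrix.mul_apply]
  rw [pd_eqOn hUo hlow hx k]
  rw [pd_sum (fun s _ =>
    (DifferentiableAt.fun_sum fun t _ => (Mf_diff s t).mul_const _).mul_const _) k]
  have step : ∀ s : Fin n,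
      pd (fun y => (∑ t, Mf a b K y s t * g0 t i) * g0 s j) k x
      = (∑ t, (cf b K s x * (if t = k then (1:ℝ) else 0)
          + cf b K t x * (if s = k then (1:ℝ) else 0)) * g0 t i) * g0 s j := by
    intro s
    rw [pd_mul_const (DifferentiableAt.fun_sum fun t _ => (Mf_diff s t).mul_const _),
      pd_sum (fun t _ => (Mf_diff s t).mul_const _) k]
    congr 1
    exact Finset.sum_congr rfl fun t _ => by rw [pd_mul_const (Mf_diff s t), pd_Mf]
  rw [Finset.sum_congr rfl fun s _ => step s]
  have expand : ∀ s : Fin n,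
      (∑ t, (cf b K s x * (if t = k then (1:ℝ) else 0)
        + cf b K t x * (if s = k then (1:ℝ) else 0)) * g0 t i) * g0 s j
      = cf b K s x * g0 k i * g0 s j
        + (if s = k then (1:ℝ) else 0) * (∑ t, cf b K t x * g0 t i) * g0 s j := by
    intro s
    rw [Finset.sum_congr rfl fun t _ => by
      rw [show (cf b K s x * (if t = k then (1:ℝ) else 0)
        + cf b K t x * (if s = k then (1:ℝ) else 0)) * g0 t i
        = cf b K s x * ((if t = k then (1:ℝ) else 0) * g0 t i)
          + (if s = k then (1:ℝ) else 0) * (cf b K t x * g0 t i) from by ring]]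
    rw [Finset.sum_add_distrib, ← Finset.mul_sum, ← Finset.mul_sum]
    have : ∑ t, (if t = k then (1:ℝ) else 0) * g0 t i = g0 k i := by
      simp [ite_mul, Finset.sum_ite_eq]
    rw [this]
    ring
  rw [Finset.sum_congr rfl fun s _ => expand s, Finset.sum_add_distrib]
  have e1 : ∑ s, cf b K s x * g0 k i * g0 s j
      = (∑ t, cf b K t x * g0 t j) * g0 k i := by
    rw [Finset.sum_mul]
    exact Finset.sum_congr rfl fun s _ => by ring
  have e2 : ∑ s, (if s = k then (1:ℝ) else 0) * (∑ t, cf b K t x * g0 t i) * g0 s j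
      = (∑ t, cf b K t x * g0 t i) * g0 k j := by
    simp [ite_mul, Finset.sum_ite_eq]
  rw [e1, e2]

lemma geodCompat_of_form (hUo : IsOpen U) (hg0sym : g0.IsSymm) (hg0det : g0.det ≠ 0)
    (hLs : ∀ i j, ContDiffOn ℝ (⊤ : ℕ∞) (fun x => L x i j) U)
    (hLsym : ∀ x ∈ U, ∀ i j, lowL (fun _ => g0) L x i j = lowL (fun _ => g0) L x j i)
    (hform : ∀ x ∈ U, ∀ i j, (L x * g0⁻¹) i j = Mf a b K x i j) :
    GeodCompatOn (fun _ => g0) L U := by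
  refine ⟨hLs, hLsym, fun x hx k i j => ?_⟩
  rw [covL_const, pd_lowL_of_form hUo hg0sym hg0det hform hx k i j,
    pd_lamL_of_form hUo hg0sym hg0det hform hx i,
    pd_lamL_of_form hUo hg0sym hg0det hform hx j]
  have h1 : g0 k i = g0 i k := by rw [hg0sym.apply]
  have h2 : g0 k j = g0 j k := by rw [hg0sym.apply]
  rw [h1, h2]
  ring

lemma lam_raise_of_form (hUo : IsOpen U) (hg0sym : g0.IsSymm) (hg0det : g0.det ≠ 0)
    (hform : ∀ x ∈ U, ∀ i j, (L x * g0⁻¹) i j = Mf a b K x i j)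
    (hx : x ∈ U) (i : Fin n) :
    ∑ s, g0⁻¹ i s * pd (lamL L) s x = b i - K * x i := by
  rw [Finset.sum_congr rfl fun s _ => by
    rw [pd_lamL_of_form hUo hg0sym hg0det hform hx s]]
  have swap : ∑ s, g0⁻¹ i s * ∑ t, cf b K t x * g0 t s
      = ∑ t, cf b K t x * ∑ s, g0⁻¹ i s * g0 s t := by
    simp only [Finset.mul_sum]
    rw [Finset.sum_comm]
    refine Finset.sum_congr rfl fun t _ => Finset.sum_congr rfl fun s _ => ?_
    rw [show g0 t s = g0 s t from by rw [hg0sym.apply]]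
    ring
  rw [swap, Finset.sum_congr rfl fun t _ => by rw [g0_inv_mul hg0det]]
  simp [mul_ite, Finset.sum_ite_eq', cf]

lemma constCurv_of_form (ha : a.IsSymm) (hg0det : g0.det ≠ 0)
    (hform : ∀ x ∈ U, ∀ i j, (L x * g0⁻¹) i j = Mf a b K x i j)
    {V : Set (Fin n → ℝ)} (hV : IsOpen V) (hVU : V ⊆ U)
    (hdeg : ∀ x ∈ V, (L x * g0⁻¹).det ≠ 0) :
    HasConstCurvOn (fun x => g0 * (L x)⁻¹) V K := by
  have hdetV : ∀ y ∈ V, (Mf a b K y).det ≠ 0 := by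
    intro y hy
    have h1 : L y * g0⁻¹ = Mf a b K y := Matrix.ext fun i j => hform y (hVU hy) i j
    rw [← h1]
    exact hdeg y hy
  have heq : ∀ y ∈ V, g0 * (L y)⁻¹ = hf a b K y := by
    intro y hy
    rw [L_eq_Mf_mul hg0det hform (hVU hy), Matrix.mul_inv_rev, ← Matrix.mul_assoc,
      Matrix.mul_nonsing_inv _ (isUnit_iff_ne_zero.2 hg0det), Matrix.one_mul]
    rfl
  exact hasConstCurvOn_congr hV heq (constCurv_hf ha hV hdetV)

end converse

section forward

variable {g0 : Matrix (Fin n) (Fin n) ℝ} {L : (Fin n → ℝ) → Matrix (Fin n) (Fin n) ℝ}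
  {U : Set (Fin n → ℝ)}

/-- `λ^i` with raised index. -/
noncomputable def lami (g0 : Matrix (Fin n) (Fin n) ℝ)
    (L : (Fin n → ℝ) → Matrix (Fin n) (Fin n) ℝ) (i : Fin n) (y : Fin n → ℝ) : ℝ :=
  ∑ s, g0⁻¹ i s * pd (lamL L) s y

lemma lam_contDiffAt (hUo : IsOpen U)
    (hLs : ∀ i j, ContDiffOn ℝ (⊤ : ℕ∞) (fun x => L x i j) U) (hx : x ∈ U) :
    ContDiffAt ℝ (⊤ : ℕ∞) (lamL L) x := by
  have h : ContDiffOn ℝ (⊤ : ℕ∞) (lamL L) U := by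
    unfold lamL
    exact contDiffOn_const.mul (ContDiffOn.sum fun i _ => hLs i i)
  exact h.contDiffAt (hUo.mem_nhds hx)

lemma lami_contDiffAt (hUo : IsOpen U)
    (hLs : ∀ i j, ContDiffOn ℝ (⊤ : ℕ∞) (fun x => L x i j) U) (hx : x ∈ U) (i : Fin n) :
    ContDiffAt ℝ (⊤ : ℕ∞) (lami g0 L i) x := by
  unfold lami
  exact ContDiffAt.sum fun s _ =>
    contDiffAt_const.mul (contDiffAt_pd (lam_contDiffAt hUo hLs hx) s)

lemma form_of_geodCompat (hn : 2 ≤ n) (hUo : IsOpen U) (hUc : IsConnected U)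
    (hg0sym : g0.IsSymm) (hg0det : g0.det ≠ 0)
    (hGC : GeodCompatOn (fun _ => g0) L U) :
    ∃ (a : Matrix (Fin n) (Fin n) ℝ) (b : Fin n → ℝ) (K : ℝ), a.IsSymm ∧
      ∀ x ∈ U, ∀ i j : Fin n,
        (L x * g0⁻¹) i j = a i j + b i * x j + b j * x i - K * (x i * x j) := by
  obtain ⟨hLs, hLsym, hcov⟩ := hGC
  obtain ⟨x₀, hx₀⟩ := hUc.nonempty
  have hpre := hUc.isPreconnected
  -- basic differentiability facts
  have hlamiD : ∀ i, ∀ y ∈ U, DifferentiableAt ℝ (lami g0 L i) y := fun i y hy =>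
    (lami_contDiffAt hUo hLs hy i).differentiableAt (by simp)
  have hlowD : ∀ s q, ∀ y ∈ U, DifferentiableAt ℝ (fun z => lowL (fun _ => g0) L z s q) y := by
    intro s q y hy
    unfold lowL
    exact DifferentiableAt.fun_sum fun p _ =>
      (((hLs p s).contDiffAt (hUo.mem_nhds hy)).differentiableAt (by simp)).mul_const _
  have hMeC : ∀ i j, ∀ y ∈ U, ContDiffAt ℝ (⊤ : ℕ∞) (fun z => (L z * g0⁻¹) i j) y := by
    intro i j y hy
    have hrw : (fun z => (L z * g0⁻¹) i j) = fun z => ∑ s, L z i s * g0⁻¹ s j := by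
      funext z; rw [Matrix.mul_apply]
    rw [hrw]
    exact ContDiffAt.sum fun s _ =>
      ((hLs i s).contDiffAt (hUo.mem_nhds hy)).mul contDiffAt_const
  -- the PDE for lowL
  have hpdlow : ∀ y ∈ U, ∀ k i j, pd (fun z => lowL (fun _ => g0) L z i j) k y
      = pd (lamL L) i y * g0 j k + pd (lamL L) j y * g0 i k := by
    intro y hy k i j
    have h := hcov y hy k i j
    rwa [covL_const] at h
  -- inverse-metric sums
  have hinvg : ∀ j k, ∑ s, g0⁻¹ s j * g0 s k = if j = k then (1:ℝ) else 0 := by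
    intro j k
    rw [Finset.sum_congr rfl fun s _ => by rw [g0inv_symm hg0sym s j]]
    exact g0_inv_mul hg0det j k
  have hlamieq : ∀ j y, ∑ s, g0⁻¹ s j * pd (lamL L) s y = lami g0 L j y := by
    intro j y
    unfold lami
    exact Finset.sum_congr rfl fun s _ => by rw [g0inv_symm hg0sym s j]
  -- the PDE for the contravariant components
  have hpdMe : ∀ y ∈ U, ∀ i j k, pd (fun z => (L z * g0⁻¹) i j) k y
      = lami g0 L i y * (if j = k then (1:ℝ) else 0)
        + lami g0 L j y * (if i = k then (1:ℝ) else 0) := by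
    intro y hy i j k
    have hrw : (fun z => (L z * g0⁻¹) i j)
        = fun z => ∑ s, ∑ q, g0⁻¹ q i * g0⁻¹ s j * lowL (fun _ => g0) L z s q := by
      funext z; exact Mentry_from_lowL hg0det z i j
    rw [hrw]
    rw [pd_sum (fun s _ => DifferentiableAt.fun_sum fun q _ => (hlowD s q y hy).const_mul _) k]
    have step : ∀ s : Fin n,
        pd (fun z => ∑ q, g0⁻¹ q i * g0⁻¹ s j * lowL (fun _ => g0) L z s q) k y
        = ∑ q, g0⁻¹ q i * g0⁻¹ s j
            * (pd (lamL L) s y * g0 q k + pd (lamL L) q y * g0 s k) := by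
      intro s
      rw [pd_sum (fun q _ => (hlowD s q y hy).const_mul _) k]
      exact Finset.sum_congr rfl fun q _ => by
        rw [pd_const_mul (hlowD s q y hy), hpdlow y hy k s q]
    rw [Finset.sum_congr rfl fun s _ => step s]
    have t1 : ∑ s, ∑ q, g0⁻¹ q i * g0⁻¹ s j
          * (pd (lamL L) s y * g0 q k + pd (lamL L) q y * g0 s k)
        = (∑ s, g0⁻¹ s j * pd (lamL L) s y) * (∑ q, g0⁻¹ q i * g0 q k)
          + (∑ s, g0⁻¹ s j * g0 s k) * (∑ q, g0⁻¹ q i * pd (lamL L) q y) := by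
      rw [Finset.sum_mul_sum, Finset.sum_mul_sum]
      rw [← Finset.sum_add_distrib]
      refine Finset.sum_congr rfl fun s _ => ?_
      rw [← Finset.sum_add_distrib]
      refine Finset.sum_congr rfl fun q _ => ?_
      ring
    have h2 : ∑ q, g0⁻¹ q i * g0 q k = if i = k then (1:ℝ) else 0 := by
      rw [Finset.sum_congr rfl fun q _ => by rw [g0inv_symm hg0sym q i]]
      exact g0_inv_mul hg0det i k
    have h3 : ∑ q, g0⁻¹ q i * pd (lamL L) q y = lami g0 L i y := by
      rw [Finset.sum_congr rfl fun q _ => by rw [g0inv_symm hg0sym q i]]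
      rfl
    rw [t1, hlamieq j y, h2, h3, hinvg j k]
    ring
  -- second derivatives
  have hpdpdMe : ∀ y ∈ U, ∀ i j k m, pd (pd (fun z => (L z * g0⁻¹) i j) k) m y
      = pd (lami g0 L i) m y * (if j = k then (1:ℝ) else 0)
        + pd (lami g0 L j) m y * (if i = k then (1:ℝ) else 0) := by
    intro y hy i j k m
    rw [pd_eqOn hUo (g := fun z => lami g0 L i z * (if j = k then (1:ℝ) else 0)
      + lami g0 L j z * (if i = k then (1:ℝ) else 0))
      (fun z hz => hpdMe z hz i j k) hy m]
    rw [pd_add ((hlamiD i y hy).mul_const _) ((hlamiD j y hy).mul_const _),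
      pd_mul_const (hlamiD i y hy), pd_mul_const (hlamiD j y hy)]
  have hrel : ∀ y ∈ U, ∀ i j k m,
      pd (lami g0 L i) m y * (if j = k then (1:ℝ) else 0)
        + pd (lami g0 L j) m y * (if i = k then (1:ℝ) else 0)
      = pd (lami g0 L i) k y * (if j = m then (1:ℝ) else 0)
        + pd (lami g0 L j) k y * (if i = m then (1:ℝ) else 0) := by
    intro y hy i j k m
    rw [← hpdpdMe y hy i j k m, ← hpdpdMe y hy i j m k]
    exact pd_comm (hMeC i j y hy) k m
  have hoff : ∀ y ∈ U, ∀ i m, i ≠ m → pd (lami g0 L i) m y = 0 := by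
    intro y hy i m hne
    have h := hrel y hy i i i m
    have e1 : (if i = i then (1:ℝ) else 0) = 1 := if_pos rfl
    have e2 : (if i = m then (1:ℝ) else 0) = 0 := if_neg hne
    rw [e1, e2] at h
    linarith
  have hdiag : ∀ y ∈ U, ∀ i j, pd (lami g0 L i) i y = pd (lami g0 L j) j y := by
    intro y hy i j
    by_cases hij : i = j
    · rw [hij]
    · have h := hrel y hy i j j i
      have e1 : (if j = j then (1:ℝ) else 0) = 1 := if_pos rfl
      have e2 : (if i = j then (1:ℝ) else 0) = 0 := if_neg hij
      have e3 : (if j = i then (1:ℝ) else 0) = 0 := if_neg (Ne.symm hij)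
      have e4 : (if i = i then (1:ℝ) else 0) = 1 := if_pos rfl
      rw [e1, e2, e3, e4] at h
      linarith
  -- the constant K
  have h0n : 0 < n := by omega
  have h1n : 1 < n := by omega
  set i0 : Fin n := ⟨0, h0n⟩ with hi0
  set j0 : Fin n := ⟨1, h1n⟩ with hj0
  have hij0 : i0 ≠ j0 := by
    simp [hi0, hj0, Fin.ext_iff]
  have hc0D : ∀ y ∈ U, DifferentiableAt ℝ (pd (lami g0 L i0) i0) y := fun y hy =>
    (contDiffAt_pd (lami_contDiffAt hUo hLs hy i0) i0).differentiableAt (by simp)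
  have hc0pd : ∀ y ∈ U, ∀ m, pd (pd (lami g0 L i0) i0) m y = 0 := by
    intro y hy m
    by_cases hm : m = i0
    · subst hm
      rw [pd_eqOn hUo (g := pd (lami g0 L j0) j0) (fun z hz => hdiag z hz i0 j0) hy i0]
      rw [pd_comm (lami_contDiffAt hUo hLs hy j0) j0 i0]
      rw [pd_eqOn hUo (g := fun _ => (0:ℝ))
        (fun z hz => hoff z hz j0 i0 (Ne.symm hij0)) hy j0]
      exact pd_const _ _ _
    · rw [pd_comm (lami_contDiffAt hUo hLs hy i0) i0 m]
      rw [pd_eqOn hUo (g := fun _ => (0:ℝ))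
        (fun z hz => hoff z hz i0 m (fun h => hm h.symm)) hy i0]
      exact pd_const _ _ _
  set K : ℝ := -(pd (lami g0 L i0) i0 x₀) with hK
  have hdiagval : ∀ y ∈ U, ∀ i, pd (lami g0 L i) i y = -K := by
    intro y hy i
    rw [hdiag y hy i i0,
      eq_const_of_pd_zero hUo hpre hc0D hc0pd hy hx₀, hK, neg_neg]
  -- the constants b
  set b : Fin n → ℝ := fun i => lami g0 L i x₀ + K * x₀ i with hb
  have hbval : ∀ y ∈ U, ∀ i, lami g0 L i y = b i - K * y i := by
    intro y hy i
    have hfD : ∀ z ∈ U, DifferentiableAt ℝ (fun w => lami g0 L i w + K * w i) z := by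
      intro z hz
      exact (hlamiD i z hz).add (by fun_prop)
    have hfpd : ∀ z ∈ U, ∀ m, pd (fun w => lami g0 L i w + K * w i) m z = 0 := by
      intro z hz m
      rw [pd_add (hlamiD i z hz) (by fun_prop), pd_const_mul (by fun_prop), pd_coord]
      by_cases him : i = m
      · subst him
        rw [if_pos rfl, hdiagval z hz i]
        ring
      · rw [if_neg him, hoff z hz i m him]
        ring
    have h := eq_const_of_pd_zero hUo hpre hfD hfpd hy hx₀
    rw [hb]
    dsimp only at h ⊢
    linarith
  -- the constants a
  set a : Matrix (Fin n) (Fin n) ℝ :=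
    Matrix.of fun i j => (L x₀ * g0⁻¹) i j - Mf 0 b K x₀ i j with haM
  have haval : ∀ y ∈ U, ∀ i j, (L y * g0⁻¹) i j - Mf 0 b K y i j = a i j := by
    intro y hy i j
    have hψD : ∀ z ∈ U, DifferentiableAt ℝ
        (fun w => (L w * g0⁻¹) i j - Mf 0 b K w i j) z := by
      intro z hz
      exact ((hMeC i j z hz).differentiableAt (by simp)).sub (Mf_diff i j)
    have hψpd : ∀ z ∈ U, ∀ k, pd (fun w => (L w * g0⁻¹) i j - Mf 0 b K w i j) k z = 0 := by
      intro z hz k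
      rw [pd_sub ((hMeC i j z hz).differentiableAt (by simp)) (Mf_diff i j),
        hpdMe z hz i j k, pd_Mf, hbval z hz i, hbval z hz j]
      unfold cf
      ring
    exact eq_const_of_pd_zero hUo hpre hψD hψpd hy hx₀
  -- symmetry of the contravariant components
  have hMesymm : ∀ y ∈ U, ∀ i j, (L y * g0⁻¹) i j = (L y * g0⁻¹) j i := by
    intro y hy i j
    rw [Mentry_from_lowL hg0det y i j, Mentry_from_lowL hg0det y j i, Finset.sum_comm]
    refine Finset.sum_congr rfl fun s _ => Finset.sum_congr rfl fun q _ => ?_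
    rw [hLsym y hy q s]
    ring
  have haSymm : a.IsSymm := by
    refine Matrix.ext fun i j => ?_
    rw [Matrix.transpose_apply, haM]
    simp only [Matrix.of_apply]
    rw [hMesymm x₀ hx₀ j i]
    simp only [Mf_apply, Matrix.zero_apply]
    ring
  refine ⟨a, b, K, haSymm, fun y hy i j => ?_⟩
  have h := haval y hy i j
  simp only [Mf_apply, Matrix.zero_apply] at h
  linarith

end forward

end S10

/-- in flat coordinates (constant `g`), `L` is geodesically
compatible with `g` iff `L^{ij} = a^{ij} + b^i x^j + b^j x^i − K x^i x^j`;
in this case `λ^i = b^i − K x^i` and wherever `L^{ij}` is non-degenerate,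
the metric `gL⁻¹` has constant curvature `K`. -/
theorem stmt_10 {n : ℕ} (hn : 2 ≤ n) (U : Set (Fin n → ℝ)) (hUo : IsOpen U)
    (hUc : IsConnected U)
    (g0 : Matrix (Fin n) (Fin n) ℝ) (hg0sym : g0.IsSymm) (hg0det : g0.det ≠ 0)
    (L : (Fin n → ℝ) → Matrix (Fin n) (Fin n) ℝ)
    (hLs : ∀ i j, ContDiffOn ℝ (⊤ : ℕ∞) (fun x => L x i j) U)
    (hLsym : ∀ x ∈ U, ∀ i j, lowL (fun _ => g0) L x i j = lowL (fun _ => g0) L x j i) :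
    (GeodCompatOn (fun _ => g0) L U ↔
      ∃ (a : Matrix (Fin n) (Fin n) ℝ) (b : Fin n → ℝ) (K : ℝ), a.IsSymm ∧
        ∀ x ∈ U, ∀ i j : Fin n,
          (L x * g0⁻¹) i j = a i j + b i * x j + b j * x i - K * (x i * x j)) ∧
    (∀ (a : Matrix (Fin n) (Fin n) ℝ) (b : Fin n → ℝ) (K : ℝ), a.IsSymm →
      (∀ x ∈ U, ∀ i j : Fin n,
        (L x * g0⁻¹) i j = a i j + b i * x j + b j * x i - K * (x i * x j)) →
      (∀ x ∈ U, ∀ i : Fin n,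
        (∑ s, g0⁻¹ i s * pd (lamL L) s x) = b i - K * x i) ∧
      ∀ V : Set (Fin n → ℝ), IsOpen V → V ⊆ U → (∀ x ∈ V, (L x * g0⁻¹).det ≠ 0) →
        HasConstCurvOn (fun x => g0 * (L x)⁻¹) V K) := by
  constructor
  · constructor
    · intro hGC
      exact S10.form_of_geodCompat hn hUo hUc hg0sym hg0det hGC
    · rintro ⟨a, b, K, ha, hform⟩
      have hform' : ∀ x ∈ U, ∀ i j : Fin n, (L x * g0⁻¹) i j = S10.Mf a b K x i j := by
        intro x hx i j
        rw [S10.Mf_apply]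
        exact hform x hx i j
      exact S10.geodCompat_of_form hUo hg0sym hg0det hLs hLsym hform'
  · intro a b K ha hform
    have hform' : ∀ x ∈ U, ∀ i j : Fin n, (L x * g0⁻¹) i j = S10.Mf a b K x i j := by
      intro x hx i j
      rw [S10.Mf_apply]
      exact hform x hx i j
    exact ⟨fun x hx i => S10.lam_raise_of_form hUo hg0sym hg0det hform' hx i,
      fun V hVo hVU hdeg => S10.constCurv_of_form ha hg0det hform' hVo hVU hdeg⟩
end
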